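/- arXiv:math/0606256 — 7 statements merged into one kernel-verified Lean document; each statement's English description precedes it below -/
import Mathlib

section
/- Let X be a nonempty complete metric space equipped with a midpoint map m, and assume (X,m) is weakly uniformly convex. Let f : X → ℝ be convex, lower semicontinuous, and satisfy f(x) → ∞ as x → ∞. Then f attains its minimum at some point of X. -/
/-- `m` is a midpoint map on the metric space `X`. -/
def IsMidpointMap {X : Type*} [MetricSpace X] (m : X → X → X) : Prop :=
  ∀ x y : X, dist x (m x y) = dist x y / 2 ∧ dist y (m x y) = dist x y / 2

/-- `(X, m)` is weakly uniformly convex. -/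
def IsWUC {X : Type*} [MetricSpace X] (m : X → X → X) : Prop :=
  ∀ (x : X) (ε r : ℝ), 0 < ε → 0 < r →
    ∃ δ > (0 : ℝ), ∀ y₁ y₂ : X, dist x y₁ ≤ r → dist x y₂ ≤ r → ε * r ≤ dist y₁ y₂ →
      δ ≤ r - dist x (m y₁ y₂)

/-- A real valued function is convex with respect to the midpoint map `m`. -/
def MConvexFun {X : Type*} [MetricSpace X] (m : X → X → X) (f : X → ℝ) : Prop :=
  ∀ x y : X, f (m x y) ≤ (f x + f y) / 2

theorem stmt_3 {X : Type*} [MetricSpace X] [CompleteSpace X] [Nonempty X] (m : X → X → X)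
    (hm : IsMidpointMap m) (hW : IsWUC m)
    (f : X → ℝ) (hconv : MConvexFun m f) (hlsc : LowerSemicontinuous f)
    (hinf : Filter.Tendsto f (Bornology.cobounded X) Filter.atTop) :
    ∃ x : X, ∀ y : X, f x ≤ f y := by
  by_contra hcon
  push_neg at hcon
  -- hcon : ∀ x, ∃ y, f y < f x
  obtain ⟨z⟩ := (inferInstance : Nonempty X)
  set C : ℝ → Set X := fun t => {x : X | f x ≤ t} with hCdef
  set T : Set ℝ := {t : ℝ | ∃ x, f x ≤ t} with hTdef
  set ρ : ℝ → ℝ := fun t => Metric.infDist z (C t) with hρdef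
  set S : Set ℝ := ρ '' T with hSdef
  have hzT : (f z) ∈ T := ⟨z, le_rfl⟩
  have hSne : S.Nonempty := ⟨ρ (f z), ⟨f z, hzT, rfl⟩⟩
  -- boundedness of sublevel sets below level `f z`
  have hcob : ∀ᶠ x in Bornology.cobounded X, f z + 1 ≤ f x :=
    hinf.eventually (Filter.eventually_ge_atTop (f z + 1))
  have hbddset : Bornology.IsBounded {x : X | f x < f z + 1} := by
    have h1 : Bornology.IsCobounded {x : X | f z + 1 ≤ f x} :=
      Bornology.isCobounded_def.2 hcob
    have h2 := h1.compl
    have : {x : X | f z + 1 ≤ f x}ᶜ = {x : X | f x < f z + 1} := by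
      ext x; simp [not_le]
    rwa [this] at h2
  obtain ⟨M, hM⟩ := hbddset.subset_closedBall z
  have hSbdd : BddAbove S := by
    refine ⟨max M 0, ?_⟩
    rintro s ⟨t, ⟨x₀, hx₀⟩, rfl⟩
    rcases le_or_gt t (f z) with hle | hlt
    · have hx₀' : x₀ ∈ Metric.closedBall z M := by
        apply hM
        simp only [Set.mem_setOf_eq]
        linarith
      have : ρ t ≤ dist z x₀ := Metric.infDist_le_dist_of_mem hx₀
      have : dist z x₀ ≤ M := by
        rw [dist_comm]; exact Metric.mem_closedBall.1 hx₀'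
      calc ρ t ≤ dist z x₀ := Metric.infDist_le_dist_of_mem hx₀
        _ ≤ M := this
        _ ≤ max M 0 := le_max_left _ _
    · have hzC : z ∈ C t := le_of_lt hlt
      calc ρ t ≤ dist z z := Metric.infDist_le_dist_of_mem hzC
        _ = 0 := dist_self z
        _ ≤ max M 0 := le_max_right _ _
  set R : ℝ := sSup S with hRdef
  have hρle : ∀ t ∈ T, ρ t ≤ R := fun t ht => le_csSup hSbdd ⟨t, ht, rfl⟩
  have hR0 : 0 ≤ R := le_trans Metric.infDist_nonneg (hρle _ hzT)
  rcases hR0.eq_or_lt with hRzero | hRpos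
  · -- R = 0 : z is a minimizer, contradiction with hcon
    obtain ⟨y₁, hy₁⟩ := hcon z
    have hy₁T : (f y₁) ∈ T := ⟨y₁, le_rfl⟩
    have hCne : (C (f y₁)).Nonempty := ⟨y₁, show f y₁ ≤ f y₁ from le_rfl⟩
    have hρ0 : ρ (f y₁) = 0 :=
      le_antisymm (by rw [hRzero]; exact hρle _ hy₁T) Metric.infDist_nonneg
    have hp : ∀ n : ℕ, ∃ p, p ∈ C (f y₁) ∧ dist z p < 1 / (n + 1 : ℝ) := by
      intro n
      have : ρ (f y₁) < 1 / (n + 1 : ℝ) := by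
        rw [hρ0]; positivity
      obtain ⟨p, hp1, hp2⟩ := (Metric.infDist_lt_iff hCne).1 this
      exact ⟨p, hp1, hp2⟩
    choose p hpC hpd using hp
    have htend : Filter.Tendsto p Filter.atTop (nhds z) := by
      rw [Metric.tendsto_atTop]
      intro ε hε
      obtain ⟨N, hN⟩ := exists_nat_one_div_lt hε
      refine ⟨N, fun n hn => ?_⟩
      have h1 : (1 : ℝ) / (n + 1) ≤ 1 / (N + 1) := by
        apply one_div_le_one_div_of_le
        · positivity
        · have : (N:ℝ) ≤ (n:ℝ) := Nat.cast_le.2 hn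
          linarith
      rw [dist_comm]
      calc dist z (p n) < 1 / (n + 1 : ℝ) := hpd n
        _ ≤ 1 / (N + 1 : ℝ) := h1
        _ < ε := hN
    have hc : (f y₁ + f z) / 2 < f z := by linarith
    have hev := htend.eventually (hlsc z _ hc)
    obtain ⟨n, hn⟩ := hev.exists
    have : f (p n) ≤ f y₁ := hpC n
    linarith
  · by_cases hdeg : ∃ t ∈ T, ρ t = R
    · -- degenerate case: impossible
      obtain ⟨t₀, ht₀T, ht₀⟩ := hdeg
      obtain ⟨x₀, hx₀⟩ := ht₀T
      obtain ⟨y₁, hy₁⟩ := hcon x₀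
      have hζt₀ : f y₁ < t₀ := lt_of_lt_of_le hy₁ hx₀
      set b : ℝ := f y₁ with hbdef
      have hat₀ : t₀ < f z := by
        by_contra hle
        push_neg at hle
        have hzC : z ∈ C t₀ := hle
        have : ρ t₀ ≤ dist z z := Metric.infDist_le_dist_of_mem hzC
        rw [dist_self] at this
        rw [ht₀] at this
        linarith
      set a : ℝ := f z with hadef
      have hba : b < a := lt_trans hζt₀ hat₀
      obtain ⟨k, hk⟩ := exists_pow_lt_of_lt_one
        (show (0:ℝ) < (t₀ - b) / (a - b) by
          apply div_pos <;> linarith)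
        (show (1/2 : ℝ) < 1 by norm_num)
      set q : ℝ := (1/2 : ℝ) ^ k with hqdef
      have hqpos : 0 < q := by positivity
      have hqle1 : q ≤ 1 := by
        rw [hqdef]
        exact pow_le_one₀ (by norm_num) (by norm_num)
      have hq1 : q * (a - b) < t₀ - b := (lt_div_iff₀ (by linarith)).1 hk
      have hbT : b ∈ T := ⟨y₁, le_rfl⟩
      have hCbne : (C b).Nonempty := ⟨y₁, show f y₁ ≤ b from le_rfl⟩
      have hρb : ρ b < ρ b + q * R := by nlinarith
      obtain ⟨pt, hptC, hptd⟩ := (Metric.infDist_lt_iff hCbne).1 hρb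
      have hdle : dist z pt ≤ R + q * R := by
        have := hρle b hbT
        linarith
      set u : ℕ → X := fun j => (fun w => m w pt)^[j] z with hudef
      have hu0 : u 0 = z := rfl
      have husucc : ∀ j, u (j + 1) = m (u j) pt := by
        intro j
        rw [hudef]
        exact Function.iterate_succ_apply' _ _ _
      have hiter : ∀ j : ℕ,
          f (u j) ≤ (1/2:ℝ)^j * a + (1 - (1/2:ℝ)^j) * b ∧
          dist (u j) pt ≤ (1/2:ℝ)^j * dist z pt ∧
          dist z (u j) ≤ (1 - (1/2:ℝ)^j) * dist z pt := by
        intro j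
        induction j with
        | zero => simp [hu0]; exact le_of_eq hadef.symm
        | succ j ih =>
          obtain ⟨ih1, ih2, ih3⟩ := ih
          have hQpos : (0:ℝ) < (1/2:ℝ)^j := by positivity
          have hm1 := (hm (u j) pt).1
          have hm2 := (hm (u j) pt).2
          have hdnn : 0 ≤ dist z pt := dist_nonneg
          have hfp : f pt ≤ b := hptC
          refine ⟨?_, ?_, ?_⟩
          · rw [husucc j, pow_succ]
            have := hconv (u j) pt
            nlinarith
          · rw [husucc j, pow_succ]
            have hmp : dist (m (u j) pt) pt = dist (u j) pt / 2 := by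
              rw [dist_comm]; exact hm2
            rw [hmp]
            linarith
          · rw [husucc j, pow_succ]
            calc dist z (m (u j) pt) ≤ dist z (u j) + dist (u j) (m (u j) pt) :=
                  dist_triangle _ _ _
              _ = dist z (u j) + dist (u j) pt / 2 := by rw [hm1]
              _ ≤ (1 - (1/2:ℝ)^j) * dist z pt + (1/2:ℝ)^j * dist z pt / 2 := by linarith
              _ = (1 - (1/2:ℝ)^j * (1/2)) * dist z pt := by ring
      obtain ⟨hk1, _, hk3⟩ := hiter k
      have hukC : u k ∈ C t₀ := by
        show f (u k) ≤ t₀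
        have : q * a + (1 - q) * b = b + q * (a - b) := by ring
        rw [← hqdef] at hk1
        linarith
      have hlow : R ≤ dist z (u k) := by
        have h := Metric.infDist_le_dist_of_mem (x := z) hukC
        rw [← ht₀]
        exact h
      have hhigh : dist z (u k) ≤ (1 - q) * dist z pt := by rw [← hqdef] at hk3; exact hk3
      have h5 : (1 - q) * dist z pt ≤ (1 - q) * (R + q * R) :=
        mul_le_mul_of_nonneg_left hdle (by linarith)
      nlinarith [mul_pos (mul_pos hqpos hqpos) hRpos]
    · -- main case: ρ t < R for all t ∈ T
      push_neg at hdeg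
      have hρlt : ∀ t ∈ T, ρ t < R := fun t ht => lt_of_le_of_ne (hρle t ht) (hdeg t ht)
      -- a sequence of levels going to the infimum
      have hzeta : ∃ ζ : ℕ → ℝ, (∀ n, ζ n ∈ T) ∧
          ∀ (y : X) (c : ℝ), f y < c → ∀ᶠ n in Filter.atTop, ζ n ≤ c := by
        by_cases hbdd : BddBelow (Set.range f)
        · refine ⟨fun n => sInf (Set.range f) + 1 / (n + 1 : ℝ), fun n => ?_, ?_⟩
          · have h1 : sInf (Set.range f) < sInf (Set.range f) + 1 / (n + 1 : ℝ) := by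
              have : (0:ℝ) < 1 / (n+1 : ℝ) := by positivity
              linarith
            obtain ⟨v, ⟨x, rfl⟩, hv⟩ :=
              exists_lt_of_csInf_lt (Set.range_nonempty f) h1
            exact ⟨x, le_of_lt hv⟩
          · intro y c hyc
            have hinf_le : sInf (Set.range f) ≤ f y := csInf_le hbdd ⟨y, rfl⟩
            have hpos : 0 < c - sInf (Set.range f) := by linarith
            have := tendsto_one_div_add_atTop_nhds_zero_nat.eventually_lt_const hpos
            filter_upwards [this] with n hn
            linarith
        · refine ⟨fun n => -(n : ℝ), fun n => ?_, ?_⟩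
          · obtain ⟨v, ⟨x, rfl⟩, hv⟩ := not_bddBelow_iff.1 hbdd (-(n:ℝ))
            exact ⟨x, le_of_lt hv⟩
          · intro y c _
            rw [Filter.eventually_atTop]
            refine ⟨⌈-c⌉₊, fun n hn => ?_⟩
            have : -c ≤ (n : ℝ) := le_trans (Nat.le_ceil _) (by exact_mod_cast hn)
            show -(n:ℝ) ≤ c
            linarith
      obtain ⟨ζ, hζT, hζev⟩ := hzeta
      -- levels realizing the sup
      have hτ : ∀ n : ℕ, ∃ t, t ∈ T ∧ R - 1 / ((n:ℝ) + 1) < ρ t := by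
        intro n
        have h1 : R - 1 / ((n:ℝ) + 1) < sSup S := by
          have : (0:ℝ) < 1 / ((n:ℝ)+1) := by positivity
          rw [← hRdef]; linarith
        obtain ⟨s, hs, hlt⟩ := exists_lt_of_lt_csSup hSne h1
        obtain ⟨t, htT, rfl⟩ := hs
        exact ⟨t, htT, hlt⟩
      choose τ hτT hτρ using hτ
      have hTmin : ∀ s t : ℝ, s ∈ T → t ∈ T → min s t ∈ T := by
        intro s t hs ht
        rcases min_cases s t with ⟨h, _⟩ | ⟨h, _⟩ <;> rw [h] <;> assumption
      set w : ℕ → ℝ := fun n => min (τ n) (ζ n) with hwdef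
      have hwT : ∀ n : ℕ, w n ∈ T := fun n => hTmin _ _ (hτT n) (hζT n)
      set ts : ℕ → ℝ := fun n => Nat.rec (w 0) (fun k ih => min ih (w (k+1))) n with htsdef
      have hts0 : ts 0 = w 0 := rfl
      have htssucc : ∀ n, ts (n+1) = min (ts n) (w (n+1)) := fun n => rfl
      have htsT : ∀ n : ℕ, ts n ∈ T := by
        intro n
        induction n with
        | zero => rw [hts0]; exact hwT 0
        | succ n ih => rw [htssucc]; exact hTmin _ _ ih (hwT (n+1))
      have htsw : ∀ n : ℕ, ts n ≤ w n := by
        intro n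
        cases n with
        | zero => exact le_of_eq hts0
        | succ n => rw [htssucc]; exact min_le_right _ _
      have htsanti : Antitone ts := by
        apply antitone_nat_of_succ_le
        intro n
        rw [htssucc]
        exact min_le_left _ _
      have hCtsne : ∀ n : ℕ, (C (ts n)).Nonempty := by
        intro n
        obtain ⟨x, hx⟩ := htsT n
        exact ⟨x, hx⟩
      have hρts : ∀ n : ℕ, R - 1 / ((n:ℝ) + 1) < ρ (ts n) := by
        intro n
        have hsub : C (ts n) ⊆ C (τ n) := by
          intro x hx
          have : ts n ≤ τ n := le_trans (htsw n) (min_le_left _ _)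
          exact le_trans hx this
        have := Metric.infDist_le_infDist_of_subset (x := z) hsub (hCtsne n)
        calc R - 1 / ((n:ℝ) + 1) < ρ (τ n) := hτρ n
          _ ≤ ρ (ts n) := this
      -- pick approximate projection points
      have hy : ∀ n : ℕ, ∃ p, f p ≤ ts n ∧ dist z p < R := by
        intro n
        have : ρ (ts n) < R := hρlt _ (htsT n)
        obtain ⟨p, hp1, hp2⟩ := (Metric.infDist_lt_iff (hCtsne n)).1 this
        exact ⟨p, hp1, hp2⟩
      choose y hyf hyd using hy
      -- the sequence is Cauchy
      have hcauchy : CauchySeq y := by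
        rw [Metric.cauchySeq_iff]
        intro ε hε
        obtain ⟨δ, hδ, hWd⟩ := hW z (ε / R) R (div_pos hε hRpos) hRpos
        obtain ⟨N, hN⟩ := exists_nat_one_div_lt hδ
        refine ⟨N, fun i hi j hj => ?_⟩
        by_contra hge
        push_neg at hge
        have h1 : dist z (y i) ≤ R := (hyd i).le
        have h2 : dist z (y j) ≤ R := (hyd j).le
        have h3 : ε / R * R ≤ dist (y i) (y j) := by
          rw [div_mul_cancel₀ _ hRpos.ne']
          exact hge
        have h4 := hWd (y i) (y j) h1 h2 h3
        have h5 : f (m (y i) (y j)) ≤ ts N := by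
          have hc := hconv (y i) (y j)
          have hi' : f (y i) ≤ ts N := le_trans (hyf i) (htsanti hi)
          have hj' : f (y j) ≤ ts N := le_trans (hyf j) (htsanti hj)
          linarith
        have h6 : ρ (ts N) ≤ dist z (m (y i) (y j)) :=
          Metric.infDist_le_dist_of_mem (x := z) h5
        have h7 := hρts N
        linarith
      obtain ⟨xs, hxs⟩ := cauchySeq_tendsto_of_complete hcauchy
      obtain ⟨y₁, hy₁⟩ := hcon xs
      have hc : (f y₁ + f xs) / 2 < f xs := by linarith
      have hev1 := hxs.eventually (hlsc xs _ hc)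
      have hev2 := hζev y₁ ((f y₁ + f xs) / 2) (by linarith)
      obtain ⟨n, hn1, hn2⟩ := (hev1.and hev2).exists
      have h8 : f (y n) ≤ ζ n :=
        le_trans (hyf n) (le_trans (htsw n) (min_le_right _ _))
      linarith
end

section
/- Let X be a nonempty complete metric space equipped with a midpoint map m, and assume (X,m) is weakly uniformly convex. Let x₀ ∈ X and let f : X → ℝ be convex, lower semicontinuous, strictly positive (f(x) > 0 for all x ∈ X), and satisfy f(x) → ∞ as x → ∞. Then there exists b > 0 such that f(x) > b·d(x₀,x) for all x ∈ X. -/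
/-- Dyadic point at parameter `1 - (1/2)^n` from `x` toward `y`. -/
lemma dyadic_pull {X : Type*} [MetricSpace X] {m : X → X → X}
    (hm : IsMidpointMap m) {f : X → ℝ} (hconv : MConvexFun m f)
    (x y : X) (n : ℕ) :
    ∃ p : X, dist y p = (1/2 : ℝ)^n * dist x y ∧
      dist x p = (1 - (1/2 : ℝ)^n) * dist x y ∧
      f p ≤ (1 - (1/2 : ℝ)^n) * f y + (1/2 : ℝ)^n * f x := by
  induction n with
  | zero =>
      exact ⟨x, by simp [dist_comm], by simp, by simp⟩
  | succ n ih =>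
      obtain ⟨p, h1, h2, h3⟩ := ih
      refine ⟨m y p, ?_, ?_, ?_⟩
      · rw [(hm y p).1, h1]; ring
      · have hyp' : dist y (m y p) = (1/2 : ℝ)^(n+1) * dist x y := by
          rw [(hm y p).1, h1]; ring
        have hpp' : dist p (m y p) = (1/2 : ℝ)^(n+1) * dist x y := by
          rw [(hm y p).2, h1]; ring
        have hub : dist x (m y p) ≤ (1 - (1/2 : ℝ)^(n+1)) * dist x y := by
          calc dist x (m y p) ≤ dist x p + dist p (m y p) := dist_triangle _ _ _
          _ = (1 - (1/2 : ℝ)^(n+1)) * dist x y := by rw [h2, hpp']; ring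
        have hlb : (1 - (1/2 : ℝ)^(n+1)) * dist x y ≤ dist x (m y p) := by
          have ht := dist_triangle x (m y p) y
          have h' : dist (m y p) y = (1/2 : ℝ)^(n+1) * dist x y := by
            rw [dist_comm]; exact hyp'
          linarith
        exact le_antisymm hub hlb
      · have h4 := hconv y p
        calc f (m y p) ≤ (f y + f p)/2 := h4
        _ ≤ (f y + ((1 - (1/2 : ℝ)^n) * f y + (1/2 : ℝ)^n * f x))/2 := by linarith
        _ = (1 - (1/2 : ℝ)^(n+1)) * f y + (1/2 : ℝ)^(n+1) * f x := by ring

theorem stmt_5 {X : Type*} [MetricSpace X] [CompleteSpace X] [Nonempty X] (m : X → X → X)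
    (hm : IsMidpointMap m) (hW : IsWUC m)
    (x₀ : X) (f : X → ℝ) (hconv : MConvexFun m f) (hlsc : LowerSemicontinuous f)
    (hpos : ∀ x : X, 0 < f x)
    (hinf : Filter.Tendsto f (Bornology.cobounded X) Filter.atTop) :
    ∃ b > (0 : ℝ), ∀ x : X, b * dist x₀ x < f x := by
  classical
  set μ := ⨅ x, f x with hμdef
  have hbdd : BddBelow (Set.range f) := ⟨0, by rintro v ⟨x, rfl⟩; exact (hpos x).le⟩
  have hμ_le : ∀ x, μ ≤ f x := fun x => ciInf_le hbdd x
  have hμ0 : 0 ≤ μ := le_ciInf fun x => (hpos x).le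
  have hexists : ∀ t : ℝ, 0 < t → ∃ x, f x < μ + t := by
    intro t ht
    exact exists_lt_of_ciInf_lt (by linarith : μ < μ + t)
  -- coercivity: a radius outside of which f is large
  obtain ⟨R₁, hR₁pos, hR₁⟩ :
      ∃ R₁ : ℝ, 0 < R₁ ∧ ∀ x : X, R₁ < dist x₀ x → max (f x₀ + 1) (μ + 2) ≤ f x := by
    have h1 : f ⁻¹' Set.Ici (max (f x₀ + 1) (μ + 2)) ∈ Bornology.cobounded X :=
      hinf (Filter.Ici_mem_atTop _)
    have h2 : Bornology.IsBounded (f ⁻¹' Set.Ici (max (f x₀ + 1) (μ + 2)))ᶜ :=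
      Bornology.IsCobounded.compl h1
    obtain ⟨r0, hr0⟩ := h2.subset_closedBall x₀
    refine ⟨max r0 1, lt_of_lt_of_le one_pos (le_max_right _ _), fun x hx => ?_⟩
    have hxball : x ∉ Metric.closedBall x₀ r0 := by
      simp only [Metric.mem_closedBall]
      rw [dist_comm]
      intro h
      have : dist x₀ x ≤ max r0 1 := le_trans h (le_max_left _ _)
      linarith
    have : x ∉ (f ⁻¹' Set.Ici (max (f x₀ + 1) (μ + 2)))ᶜ := fun h => hxball (hr0 h)
    simpa using this
  -- sublevel sets
  set C : ℕ → Set X := fun n => {x | f x ≤ μ + (1/2 : ℝ)^n} with hCdef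
  have hCne : ∀ n, (C n).Nonempty := by
    intro n
    obtain ⟨x, hx⟩ := hexists ((1/2 : ℝ)^n) (by positivity)
    exact ⟨x, hx.le⟩
  have hCclosed : ∀ n, IsClosed (C n) := fun n => hlsc.isClosed_preimage _
  have hCsub : ∀ n, ∀ x ∈ C n, dist x₀ x ≤ R₁ := by
    intro n x hx
    by_contra h
    push_neg at h
    have h2 := hR₁ x h
    have h3 : μ + 2 ≤ f x := le_trans (le_max_right _ _) h2
    have hx' : f x ≤ μ + (1/2 : ℝ)^n := hx
    have h4 : (1/2 : ℝ)^n ≤ 1 := pow_le_one₀ (by norm_num) (by norm_num)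
    linarith
  set φ : ℕ → ℝ := fun n => Metric.infDist x₀ (C n) with hφdef
  have hCmono : ∀ a b : ℕ, a ≤ b → C b ⊆ C a := by
    intro a b hab x hx
    have : (1/2 : ℝ)^b ≤ (1/2 : ℝ)^a := pow_le_pow_of_le_one (by norm_num) (by norm_num) hab
    have hx' : f x ≤ μ + (1/2 : ℝ)^b := hx
    show f x ≤ μ + (1/2 : ℝ)^a
    linarith
  have hφmono : Monotone φ := fun a b hab =>
    Metric.infDist_le_infDist_of_subset (hCmono a b hab) (hCne b)
  have hφbdd : ∀ n, φ n ≤ R₁ := by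
    intro n
    obtain ⟨yy, hyy⟩ := hCne n
    calc φ n ≤ dist x₀ yy := Metric.infDist_le_dist_of_mem hyy
    _ ≤ R₁ := hCsub n yy hyy
  have hφ0 : ∀ n, 0 ≤ φ n := fun n => Metric.infDist_nonneg
  set r : ℝ := ⨆ n, φ n with hrdef
  have hrbddA : BddAbove (Set.range φ) := ⟨R₁, by rintro v ⟨n, rfl⟩; exact hφbdd n⟩
  have hφler : ∀ n, φ n ≤ r := fun n => le_ciSup hrbddA n
  have hr0 : 0 ≤ r := le_trans (hφ0 0) (hφler 0)
  -- attainment of the minimum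
  have hmin : ∃ z : X, ∀ x, f z ≤ f x := by
    rcases eq_or_lt_of_le hr0 with hr0' | hrpos
    · -- r = 0 : x₀ is a minimizer
      refine ⟨x₀, fun x => ?_⟩
      have hx₀C : ∀ n, x₀ ∈ C n := by
        intro n
        have h0 : φ n = 0 := le_antisymm (hr0' ▸ hφler n) (hφ0 n)
        exact ((hCclosed n).mem_iff_infDist_zero (hCne n)).2 h0
      have hfx₀ : f x₀ ≤ μ := by
        by_contra h
        push_neg at h
        obtain ⟨n, hn⟩ : ∃ n : ℕ, (1/2 : ℝ)^n < f x₀ - μ :=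
          exists_pow_lt_of_lt_one (by linarith) (by norm_num)
        have h2 : f x₀ ≤ μ + (1/2 : ℝ)^n := hx₀C n
        linarith
      exact le_trans hfx₀ (hμ_le x)
    · -- r > 0
      have hyn : ∀ n : ℕ, ∃ yy, yy ∈ C n ∧ dist x₀ yy < φ n + r * (1/2 : ℝ)^n := by
        intro n
        have hlt : Metric.infDist x₀ (C n) < φ n + r * (1/2 : ℝ)^n := by
          have hh : (0:ℝ) < r * (1/2 : ℝ)^n := by positivity
          have : φ n = Metric.infDist x₀ (C n) := rfl
          linarith
        obtain ⟨yy, hyC, hyd⟩ := (Metric.infDist_lt_iff (hCne n)).1 hlt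
        exact ⟨yy, hyC, hyd⟩
      choose y hyC hyd using hyn
      have hpn : ∀ n : ℕ, ∃ p : X, dist x₀ p ≤ r ∧ f p ≤ μ + (1 + f x₀) * (1/2 : ℝ)^n := by
        intro n
        obtain ⟨p, _, h2, h3⟩ := dyadic_pull hm hconv x₀ (y n) n
        have hlam0 : (0:ℝ) ≤ (1/2 : ℝ)^n := by positivity
        have hlam1 : (1/2 : ℝ)^n ≤ 1 := pow_le_one₀ (by norm_num) (by norm_num)
        have hd : dist x₀ (y n) ≤ φ n + r * (1/2 : ℝ)^n := (hyd n).le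
        have hφr : φ n ≤ r := hφler n
        have hφ0' : 0 ≤ φ n := hφ0 n
        refine ⟨p, ?_, ?_⟩
        · calc dist x₀ p = (1 - (1/2 : ℝ)^n) * dist x₀ (y n) := h2
          _ ≤ (1 - (1/2 : ℝ)^n) * (φ n + r * (1/2 : ℝ)^n) :=
              mul_le_mul_of_nonneg_left hd (by linarith)
          _ ≤ r := by nlinarith [mul_nonneg hlam0 hlam0, mul_nonneg hlam0 hφ0',
              mul_nonneg (mul_nonneg hlam0 hlam0) hr0]
        · have hfy : f (y n) ≤ μ + (1/2 : ℝ)^n := hyC n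
          have hfx₀0 : 0 ≤ f x₀ := (hpos x₀).le
          nlinarith [mul_le_mul_of_nonneg_left hfy (by linarith : (0:ℝ) ≤ 1 - (1/2 : ℝ)^n),
            mul_nonneg hlam0 hμ0, mul_nonneg hlam0 hlam0]
      choose p hp1 hp2 using hpn
      have hcauchy : CauchySeq p := by
        rw [Metric.cauchySeq_iff]
        intro ε hε
        obtain ⟨δ, hδpos, hδ⟩ := hW x₀ (ε / r) r (div_pos hε hrpos) hrpos
        obtain ⟨n₀, hn₀⟩ : ∃ n, r - δ < φ n := by
          by_contra h
          push_neg at h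
          have : r ≤ r - δ := ciSup_le h
          linarith
        obtain ⟨c, hc⟩ : ∃ c : ℕ, (1 + f x₀) < 2^c :=
          pow_unbounded_of_one_lt (1 + f x₀) one_lt_two
        refine ⟨n₀ + c, fun i hi j hj => ?_⟩
        by_contra hfar
        push_neg at hfar
        set w := m (p i) (p j) with hwdef
        have hkey : ∀ k : ℕ, n₀ + c ≤ k → f (p k) ≤ μ + (1/2 : ℝ)^n₀ := by
          intro k hk
          have h1 : f (p k) ≤ μ + (1 + f x₀) * (1/2 : ℝ)^k := hp2 k
          have h2 : (1/2 : ℝ)^k ≤ (1/2 : ℝ)^(n₀ + c) :=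
            pow_le_pow_of_le_one (by norm_num) (by norm_num) hk
          have h3 : (1 + f x₀) * (1/2 : ℝ)^k ≤ (1 + f x₀) * (1/2 : ℝ)^(n₀ + c) :=
            mul_le_mul_of_nonneg_left h2 (by nlinarith [(hpos x₀).le])
          have h4 : (1 + f x₀) * (1/2 : ℝ)^(n₀ + c) ≤ 2^c * (1/2 : ℝ)^(n₀ + c) :=
            mul_le_mul_of_nonneg_right hc.le (by positivity)
          have h5 : (2:ℝ)^c * (1/2 : ℝ)^(n₀ + c) = (1/2 : ℝ)^n₀ := by
            rw [pow_add]
            have : (1/2 : ℝ)^c * (2:ℝ)^c = 1 := by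
              rw [← mul_pow]; norm_num
            calc (2:ℝ)^c * ((1/2 : ℝ)^n₀ * (1/2 : ℝ)^c)
                = (1/2 : ℝ)^n₀ * ((1/2 : ℝ)^c * (2:ℝ)^c) := by ring
            _ = (1/2 : ℝ)^n₀ := by rw [this, mul_one]
          linarith
        have hfw : f w ≤ μ + (1/2 : ℝ)^n₀ := by
          have h1 := hkey i hi
          have h2 := hkey j hj
          have h3 := hconv (p i) (p j)
          simp only [hwdef]
          linarith
        have hwC : w ∈ C n₀ := hfw
        have hwd : φ n₀ ≤ dist x₀ w := Metric.infDist_le_dist_of_mem hwC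
        have happ := hδ (p i) (p j) (hp1 i) (hp1 j)
          (by rw [div_mul_cancel₀ ε (ne_of_gt hrpos)]; exact hfar)
        linarith
      obtain ⟨z, hz⟩ := cauchySeq_tendsto_of_complete hcauchy
      refine ⟨z, fun x => le_trans ?_ (hμ_le x)⟩
      by_contra hzc
      push_neg at hzc
      have hev : ∀ᶠ n in Filter.atTop, (μ + (f z - μ)/2 : ℝ) < f (p n) :=
        hz.eventually (hlsc z (μ + (f z - μ)/2) (by linarith))
      obtain ⟨n₁, hn₁⟩ : ∃ n : ℕ, (1 + f x₀) * (1/2 : ℝ)^n < (f z - μ)/2 := by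
        have hA : (0:ℝ) < 1 + f x₀ := by nlinarith [(hpos x₀).le]
        obtain ⟨n, hn⟩ : ∃ n : ℕ, (1/2 : ℝ)^n < ((f z - μ)/2) / (1 + f x₀) :=
          exists_pow_lt_of_lt_one (div_pos (by linarith) hA) (by norm_num)
        refine ⟨n, ?_⟩
        rw [lt_div_iff₀ hA] at hn
        nlinarith
      obtain ⟨n, hn_ge, hn_ev⟩ :=
        ((Filter.eventually_ge_atTop n₁).and hev).exists
      have h1 : f (p n) ≤ μ + (1 + f x₀) * (1/2 : ℝ)^n := hp2 n
      have h2 : (1/2 : ℝ)^n ≤ (1/2 : ℝ)^n₁ :=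
        pow_le_pow_of_le_one (by norm_num) (by norm_num) hn_ge
      have h3 : (1 + f x₀) * (1/2 : ℝ)^n ≤ (1 + f x₀) * (1/2 : ℝ)^n₁ :=
        mul_le_mul_of_nonneg_left h2 (by nlinarith [(hpos x₀).le])
      linarith
  obtain ⟨z, hz⟩ := hmin
  have hμ'pos : 0 < f z := hpos z
  -- linear growth outside the ball of radius R₁
  have hgrow : ∀ x : X, R₁ < dist x₀ x → dist x₀ x / (2 * R₁) < f x := by
    intro x hx
    have hd0 : 0 < dist x₀ x := lt_trans hR₁pos hx
    have hex : ∃ k : ℕ, dist x₀ x ≤ 2 * R₁ * 2^k := by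
      obtain ⟨k, hk⟩ := pow_unbounded_of_one_lt (dist x₀ x / (2 * R₁)) one_lt_two
      refine ⟨k, ?_⟩
      rw [div_lt_iff₀ (by linarith)] at hk
      nlinarith
    set k := Nat.find hex with hkdef
    have hk1 : dist x₀ x ≤ 2 * R₁ * 2^k := Nat.find_spec hex
    have hk2 : R₁ * 2^k < dist x₀ x := by
      rcases Nat.eq_zero_or_pos k with h0 | hpos'
      · rw [h0]; simpa using hx
      · obtain ⟨j, hj⟩ := Nat.exists_eq_succ_of_ne_zero (Nat.pos_iff_ne_zero.1 hpos')
        have hmin' := Nat.find_min hex (by omega : j < k)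
        push_neg at hmin'
        have : (2:ℝ) * R₁ * 2^j = R₁ * 2^k := by
          rw [hj, pow_succ]; ring
        linarith
    obtain ⟨p, h1, _, h3⟩ := dyadic_pull hm hconv x x₀ k
    have hdp : dist x₀ p = (1/2 : ℝ)^k * dist x₀ x := by
      rw [h1, dist_comm x x₀]
    have ht2 : (1/2 : ℝ)^k * (2:ℝ)^k = 1 := by rw [← mul_pow]; norm_num
    have ht0 : (0:ℝ) < (1/2 : ℝ)^k := by positivity
    have h2k0 : (0:ℝ) < (2:ℝ)^k := by positivity
    have hdpR : R₁ < dist x₀ p := by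
      rw [hdp]
      have hR₁eq : (1/2 : ℝ)^k * (R₁ * 2^k) = R₁ := by
        calc (1/2 : ℝ)^k * (R₁ * 2^k) = R₁ * ((1/2 : ℝ)^k * 2^k) := by ring
        _ = R₁ := by rw [ht2, mul_one]
      linarith [mul_lt_mul_of_pos_left hk2 ht0]
    have hfp : f x₀ + 1 ≤ f p := le_trans (le_max_left _ _) (hR₁ p hdpR)
    -- from convexity bound : f x ≥ f x₀ + 2^k
    have hfx : 2^k + f x₀ ≤ f x := by
      have h4 : f x₀ + 1 ≤ (1 - (1/2 : ℝ)^k) * f x₀ + (1/2 : ℝ)^k * f x := le_trans hfp h3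
      have h5 : (1:ℝ) ≤ (1/2 : ℝ)^k * (f x - f x₀) := by nlinarith
      have h6 : (2:ℝ)^k * 1 ≤ (2:ℝ)^k * ((1/2 : ℝ)^k * (f x - f x₀)) :=
        mul_le_mul_of_nonneg_left h5 h2k0.le
      have h7 : (2:ℝ)^k * ((1/2 : ℝ)^k * (f x - f x₀)) = f x - f x₀ := by
        calc (2:ℝ)^k * ((1/2 : ℝ)^k * (f x - f x₀))
            = ((1/2 : ℝ)^k * (2:ℝ)^k) * (f x - f x₀) := by ring
        _ = f x - f x₀ := by rw [ht2, one_mul]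
      linarith
    have hdiv : dist x₀ x / (2 * R₁) ≤ 2^k := by
      rw [div_le_iff₀ (by linarith)]
      linarith [hk1]
    linarith [hpos x₀]
  -- conclusion
  refine ⟨min (f z) 1 / (2 * R₁), div_pos (lt_min hμ'pos one_pos) (by linarith), fun x => ?_⟩
  rcases le_or_gt (dist x₀ x) R₁ with hle | hlt
  · have h1 : min (f z) 1 / (2 * R₁) * dist x₀ x ≤ min (f z) 1 / (2 * R₁) * R₁ :=
      mul_le_mul_of_nonneg_left hle (le_of_lt (div_pos (lt_min hμ'pos one_pos) (by linarith)))
    have h2 : min (f z) 1 / (2 * R₁) * R₁ = min (f z) 1 / 2 := by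
      field_simp
    have h3 : min (f z) 1 / 2 ≤ f z / 2 := by
      have := min_le_left (f z) 1
      linarith
    have h4 : f z / 2 < f z := by linarith
    have h5 : f z ≤ f x := hz x
    linarith
  · have hgx := hgrow x hlt
    have hmin1 : min (f z) 1 ≤ 1 := min_le_right _ _
    have h1 : min (f z) 1 / (2 * R₁) * dist x₀ x ≤ 1 / (2 * R₁) * dist x₀ x := by
      gcongr
    have h2 : 1 / (2 * R₁) * dist x₀ x = dist x₀ x / (2 * R₁) := by ring
    linarith
end

section
/- Let X be a complete metric space equipped with a midpoint map m, and assume (X,m) is Busemann non-positively curved and weakly uniformly convex. Assume the set CL(X) of Clifford isometries of X is closed under composition and under taking inverses. Then any two Clifford isometries of X commute: S ∘ T = T ∘ S for all S, T ∈ CL(X). -/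
/-- `(X, m)` is Busemann non-positively curved. -/
def IsBNPC {X : Type*} [MetricSpace X] (m : X → X → X) : Prop :=
  ∀ x₁ y₁ x₂ y₂ : X, dist (m x₁ y₁) (m x₂ y₂) ≤ (dist x₁ x₂ + dist y₁ y₂) / 2

/-- A Clifford isometry: a surjective isometry with constant displacement. -/
def IsClifford {X : Type*} [MetricSpace X] (T : X → X) : Prop :=
  Function.Surjective T ∧ Isometry T ∧ ∃ c : ℝ, ∀ x : X, dist x (T x) = c

section Aux
variable {X : Type*} [MetricSpace X] {m : X → X → X}

lemma mid_self (hm : IsMidpointMap m) (x : X) : m x x = x := by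
  have h := (hm x x).1
  simp only [dist_self, zero_div] at h
  exact (dist_eq_zero.mp h).symm

/-- Uniqueness of midpoints, from weak uniform convexity. -/
lemma mid_uniq (hm : IsMidpointMap m) (hWu : IsWUC m)
    {x y z : X} (h1 : dist x z = dist x y / 2) (h2 : dist y z = dist x y / 2) :
    z = m x y := by
  by_contra hne
  have hmx := (hm x y).1
  have hmy := (hm x y).2
  rcases eq_or_ne (dist x y) 0 with h0 | h0
  · have hxy : x = y := dist_eq_zero.mp h0
    have hz : z = x := by
      have : dist x z = 0 := by rw [h1, h0]; ring
      exact (dist_eq_zero.mp this).symm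
    have hmxy : m x y = x := by
      rw [← hxy] at *
      exact mid_self hm x
    exact hne (by rw [hz, hmxy])
  · have hdpos : 0 < dist x y := lt_of_le_of_ne dist_nonneg (Ne.symm h0)
    set r := dist x y / 2 with hrdef
    have hrpos : 0 < r := by positivity
    have hepos : 0 < dist z (m x y) := dist_pos.mpr hne
    set ε := dist z (m x y) / r with hεdef
    have hεpos : 0 < ε := div_pos hepos hrpos
    obtain ⟨δ₁, hδ₁pos, H₁⟩ := hWu x ε r hεpos hrpos
    obtain ⟨δ₂, hδ₂pos, H₂⟩ := hWu y ε r hεpos hrpos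
    have hεr : ε * r = dist z (m x y) := div_mul_cancel₀ _ hrpos.ne'
    have A := H₁ z (m x y) (le_of_eq h1) (le_of_eq hmx) (le_of_eq hεr)
    have B := H₂ z (m x y) (le_of_eq h2) (le_of_eq hmy) (le_of_eq hεr)
    have tri := dist_triangle x (m z (m x y)) y
    have hcomm : dist (m z (m x y)) y = dist y (m z (m x y)) := dist_comm _ _
    have hxy2 : dist x y = 2 * r := by rw [hrdef]; ring
    linarith

lemma mid_comm (hm : IsMidpointMap m) (hWu : IsWUC m) (x y : X) : m y x = m x y := by
  apply mid_uniq hm hWu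
  · rw [dist_comm x y]; exact (hm y x).2
  · rw [dist_comm x y]; exact (hm y x).1

lemma iso_mid (hm : IsMidpointMap m) (hWu : IsWUC m) {f : X → X} (hf : Isometry f)
    (x y : X) : f (m x y) = m (f x) (f y) := by
  apply mid_uniq hm hWu
  · rw [hf.dist_eq, hf.dist_eq]; exact (hm x y).1
  · rw [hf.dist_eq, hf.dist_eq]; exact (hm x y).2

end Aux

section Sq
variable {X : Type*} [MetricSpace X] {m : X → X → X}

lemma sq_homog (hm : IsMidpointMap m) (hB : IsBNPC m) (hWu : IsWUC m)
    (hcomp : ∀ S T : X → X, IsClifford S → IsClifford T → IsClifford (S ∘ T))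
    {U U' : X → X} (hU : IsClifford U) (hU' : IsClifford U')
    (hl : Function.LeftInverse U' U) (hr : Function.RightInverse U' U)
    (x : X) : dist x (U (U x)) = 2 * dist x (U x) := by
  have hUi : Isometry U := hU.2.1
  have hU's : Function.Surjective U' := hU'.1
  have hU'i : Isometry U' := hU'.2.1
  obtain ⟨_, _, c2, hc2⟩ := hcomp U U hU hU
  have hc2' : ∀ y : X, dist y (U (U y)) = c2 := fun y => hc2 y
  -- the displacement between U and U' is also c2
  have key1 : ∀ y : X, dist (U y) (U' y) = c2 := by
    intro y
    have h := hUi.dist_eq (U y) (U' y)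
    rw [hr y] at h
    rw [← h, dist_comm]
    exact hc2' y
  let Z : X → X := fun y => m (U y) (U' y)
  have hZ1 : ∀ y : X, dist (U y) (Z y) = c2 / 2 := by
    intro y
    have h := (hm (U y) (U' y)).1
    rw [key1 y] at h
    exact h
  have hZ2 : ∀ y : X, dist (U' y) (Z y) = c2 / 2 := by
    intro y
    have h := (hm (U y) (U' y)).2
    rw [key1 y] at h
    exact h
  have lemA : ∀ y : X, dist y (U' (Z y)) = c2 / 2 := by
    intro y
    have h : dist y (U' (Z y)) = dist (U y) (U (U' (Z y))) := (hUi.dist_eq _ _).symm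
    rw [hr (Z y)] at h
    rw [h]; exact hZ1 y
  have lemB : ∀ y : X, dist y (U (Z y)) = c2 / 2 := by
    intro y
    have h : dist y (U (Z y)) = dist (U' y) (U' (U (Z y))) := (hU'i.dist_eq _ _).symm
    rw [hl (Z y)] at h
    rw [h]; exact hZ2 y
  have hZZ : ∀ y : X, Z (Z y) = y := by
    intro y
    have h1 : dist (U (Z y)) y = dist (U (Z y)) (U' (Z y)) / 2 := by
      rw [key1 (Z y), dist_comm]; exact lemB y
    have h2 : dist (U' (Z y)) y = dist (U (Z y)) (U' (Z y)) / 2 := by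
      rw [key1 (Z y), dist_comm]; exact lemA y
    exact (mid_uniq hm hWu h1 h2).symm
  have hZlip : ∀ a b : X, dist (Z a) (Z b) ≤ dist a b := by
    intro a b
    have h := hB (U a) (U' a) (U b) (U' b)
    rw [hUi.dist_eq, hU'i.dist_eq] at h
    linarith
  have hZiso : Isometry Z := by
    apply Isometry.of_dist_eq
    intro a b
    refine le_antisymm (hZlip a b) ?_
    calc dist a b = dist (Z (Z a)) (Z (Z b)) := by rw [hZZ a, hZZ b]
      _ ≤ dist (Z a) (Z b) := hZlip _ _
  have hZsurj : Function.Surjective Z := fun y => ⟨Z y, hZZ y⟩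
  have hH : IsClifford (U' ∘ Z) :=
    ⟨hU's.comp hZsurj, hU'i.comp hZiso, c2 / 2, fun y => lemA y⟩
  have hZcliff : IsClifford Z := by
    have h := hcomp U (U' ∘ Z) hU hH
    have he : U ∘ (U' ∘ Z) = Z := funext fun y => hr (Z y)
    rwa [he] at h
  obtain ⟨_, _, cz, hcz⟩ := hZcliff
  have hcz0 : cz = 0 := by
    have h1 : Z (m x (Z x)) = m x (Z x) := by
      have h := iso_mid hm hWu hZiso x (Z x)
      rw [hZZ x] at h
      rw [h]
      exact mid_comm hm hWu x (Z x)
    have h := hcz (m x (Z x))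
    rw [h1, dist_self] at h
    exact h.symm
  have hZid : Z x = x := by
    have h := hcz x
    rw [hcz0] at h
    exact (dist_eq_zero.mp h).symm
  have h1 := hZ1 x
  rw [hZid, dist_comm] at h1
  have h2 := hc2' x
  linarith
end Sq

theorem stmt_6 {X : Type*} [MetricSpace X] [CompleteSpace X] (m : X → X → X)
    (hm : IsMidpointMap m) (hB : IsBNPC m) (hW : IsWUC m)
    (hcomp : ∀ S T : X → X, IsClifford S → IsClifford T → IsClifford (S ∘ T))
    (hinv : ∀ T : X → X, IsClifford T → ∀ S : X → X,
      Function.LeftInverse S T → Function.RightInverse S T → IsClifford S)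
    (S T : X → X) (hS : IsClifford S) (hT : IsClifford T) :
    S ∘ T = T ∘ S := by
  funext x₀
  haveI : Nonempty X := ⟨x₀⟩
  show S (T x₀) = T (S x₀)
  have hTi : Isometry T := hT.2.1
  obtain ⟨t, ht⟩ := hT.2.2
  -- the two Clifford isometries U = S ∘ T and W = T ∘ S
  have hU : IsClifford (S ∘ T) := hcomp S T hS hT
  have hWc : IsClifford (T ∘ S) := hcomp T S hT hS
  set U : X → X := S ∘ T with hUdef
  set W : X → X := T ∘ S with hWdef
  -- inverses
  have hUl : Function.LeftInverse (Function.invFun U) U :=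
    Function.leftInverse_invFun hU.2.1.injective
  have hUr : Function.RightInverse (Function.invFun U) U :=
    Function.rightInverse_invFun hU.1
  have hU' : IsClifford (Function.invFun U) := hinv U hU _ hUl hUr
  have hWl : Function.LeftInverse (Function.invFun W) W :=
    Function.leftInverse_invFun hWc.2.1.injective
  have hWr : Function.RightInverse (Function.invFun W) W :=
    Function.rightInverse_invFun hWc.1
  have hW' : IsClifford (Function.invFun W) := hinv W hWc _ hWl hWr
  have hTl : Function.LeftInverse (Function.invFun T) T :=
    Function.leftInverse_invFun hTi.injective
  have hTr : Function.RightInverse (Function.invFun T) T :=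
    Function.rightInverse_invFun hT.1
  -- square homogeneity
  have hsqU : ∀ x, dist x (U (U x)) = 2 * dist x (U x) :=
    sq_homog hm hB hW hcomp hU hU' hUl hUr
  have hsqW : ∀ x, dist x (W (W x)) = 2 * dist x (W x) :=
    sq_homog hm hB hW hcomp hWc hW' hWl hWr
  obtain ⟨q, hq⟩ := hU.2.2
  obtain ⟨q₂, hq₂⟩ := hWc.2.2
  -- iterates of U are isometric
  have hUiter : ∀ (n : ℕ) (a b : X), dist (U^[n] a) (U^[n] b) = dist a b := by
    intro n
    induction n with
    | zero => intro a b; simp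
    | succ n ih =>
      intro a b
      rw [Function.iterate_succ_apply, Function.iterate_succ_apply, ih,
        hU.2.1.dist_eq]
  -- W^[n] = T ∘ U^[n] ∘ T⁻¹
  have hWU : ∀ (n : ℕ) (x : X), W^[n] x = T (U^[n] (Function.invFun T x)) := by
    intro n
    induction n with
    | zero => intro x; simp [hTr x]
    | succ n ih =>
      intro x
      rw [Function.iterate_succ_apply, ih (W x)]
      congr 1
      have h1 : Function.invFun T (W x) = S x := by
        have : W x = T (S x) := rfl
        rw [this, hTl (S x)]
      rw [h1, Function.iterate_succ_apply]
      congr 1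
      show S x = S (T (Function.invFun T x))
      rw [hTr x]
  set k : ℕ → ℝ := fun n => dist (U^[n] x₀) (W^[n] x₀) with hkdef
  have hk0 : k 0 = 0 := by simp [hkdef]
  -- boundedness: k n ≤ 2t
  have hbound : ∀ n, k n ≤ 2 * t := by
    intro n
    have h1 : k n = dist (U^[n] x₀) (T (U^[n] (Function.invFun T x₀))) := by
      rw [hkdef]; simp only []; rw [hWU n x₀]
    have h2 : dist (U^[n] x₀) (T (U^[n] x₀)) = t := ht _
    have h3 : dist (T (U^[n] x₀)) (T (U^[n] (Function.invFun T x₀))) = t := by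
      rw [hTi.dist_eq, hUiter]
      have : dist x₀ (Function.invFun T x₀) = dist (T x₀) (T (Function.invFun T x₀)) :=
        (hTi.dist_eq _ _).symm
      rw [this, hTr x₀, dist_comm]
      exact ht x₀
    calc k n = dist (U^[n] x₀) (T (U^[n] (Function.invFun T x₀))) := h1
      _ ≤ dist (U^[n] x₀) (T (U^[n] x₀))
          + dist (T (U^[n] x₀)) (T (U^[n] (Function.invFun T x₀))) := dist_triangle _ _ _
      _ = 2 * t := by rw [h2, h3]; ring
  -- orbit points are midpoints of their neighbours
  have humid : ∀ n : ℕ, U^[n+1] x₀ = m (U^[n] x₀) (U^[n+2] x₀) := by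
    intro n
    have e1 : U^[n+1] x₀ = U (U^[n] x₀) := Function.iterate_succ_apply' U n x₀
    have e2 : U^[n+2] x₀ = U (U (U^[n] x₀)) := by
      rw [Function.iterate_succ_apply' U (n+1) x₀, e1]
    apply mid_uniq hm hW
    · rw [e1, e2, hsqU (U^[n] x₀)]
      rw [hq (U^[n] x₀)]
      ring
    · rw [e1, e2, hsqU (U^[n] x₀)]
      have : dist (U (U (U^[n] x₀))) (U (U^[n] x₀)) = dist (U (U^[n] x₀)) (U^[n] x₀) :=
        hU.2.1.dist_eq _ _
      rw [this, dist_comm, hq (U^[n] x₀)]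
      ring
  have hwmid : ∀ n : ℕ, W^[n+1] x₀ = m (W^[n] x₀) (W^[n+2] x₀) := by
    intro n
    have e1 : W^[n+1] x₀ = W (W^[n] x₀) := Function.iterate_succ_apply' W n x₀
    have e2 : W^[n+2] x₀ = W (W (W^[n] x₀)) := by
      rw [Function.iterate_succ_apply' W (n+1) x₀, e1]
    apply mid_uniq hm hW
    · rw [e1, e2, hsqW (W^[n] x₀)]
      rw [hq₂ (W^[n] x₀)]
      ring
    · rw [e1, e2, hsqW (W^[n] x₀)]
      have : dist (W (W (W^[n] x₀))) (W (W^[n] x₀)) = dist (W (W^[n] x₀)) (W^[n] x₀) :=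
        hWc.2.1.dist_eq _ _
      rw [this, dist_comm, hq₂ (W^[n] x₀)]
      ring
  -- convexity of k
  have hconv : ∀ n : ℕ, k (n+1) ≤ (k n + k (n+2)) / 2 := by
    intro n
    have h := hB (U^[n] x₀) (U^[n+2] x₀) (W^[n] x₀) (W^[n+2] x₀)
    rw [← humid n, ← hwmid n] at h
    exact h
  -- increments grow
  have hstep : ∀ n : ℕ, k 1 + k n ≤ k (n+1) := by
    intro n
    induction n with
    | zero => rw [hk0]; linarith
    | succ n ih =>
      have h := hconv n
      linarith
  have hgrow : ∀ n : ℕ, (n : ℝ) * k 1 ≤ k n := by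
    intro n
    induction n with
    | zero => rw [hk0]; simp
    | succ n ih =>
      have h := hstep n
      push_cast
      linarith
  have hk1 : k 1 ≤ 0 := by
    by_contra h
    push_neg at h
    obtain ⟨n, hn⟩ := exists_nat_gt ((2 * t) / k 1)
    have h1 := hgrow n
    have h2 := hbound n
    have h3 : (2 * t) / k 1 * k 1 < (n : ℝ) * k 1 :=
      mul_lt_mul_of_pos_right hn h
    rw [div_mul_cancel₀ _ (ne_of_gt h)] at h3
    linarith
  have hk1z : k 1 = 0 := le_antisymm hk1 (by rw [hkdef]; exact dist_nonneg)
  have : U^[1] x₀ = W^[1] x₀ := dist_eq_zero.mp hk1z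
  simpa [hUdef, hWdef] using this
end

section
/- Let X be a complete metric space equipped with a midpoint map m, and assume (X,m) is Busemann non-positively curved and weakly uniformly convex, and that the only Clifford isometry of X is the identity. Let Γ be a group acting on X by isometries, acting non-trivially, and let Σ be a finite generating set of Γ. If the action is reduced, then d_Σ(x) → ∞ as x → ∞. -/
/-- A subset `C` is convex with respect to the midpoint map `m`. -/
def MConvex {X : Type*} [MetricSpace X] (m : X → X → X) (C : Set X) : Prop :=
  ∀ y₁ ∈ C, ∀ y₂ ∈ C, m y₁ y₂ ∈ C

/-- The displacement function `d_Σ(x) = max_{σ ∈ Σ} d(σ·x, x)` (`0` if `Σ = ∅`). -/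
noncomputable def displ {Γ X : Type*} [Group Γ] [MetricSpace X] [MulAction Γ X]
    (S : Finset Γ) (x : X) : ℝ :=
  S.fold max 0 fun σ => dist (σ • x) x

/-- The action of `Γ` on `X` is reduced: there is no unbounded closed convex proper subset
`Y ⊊ X` such that `γ • Y` is at finite Hausdorff distance from `Y` for every `γ ∈ Γ`. -/
def ReducedAction (Γ : Type*) {X : Type*} [Group Γ] [MetricSpace X] [MulAction Γ X]
    (m : X → X → X) : Prop :=
  ¬ ∃ Y : Set X, ¬ Bornology.IsBounded Y ∧ IsClosed Y ∧ MConvex m Y ∧ Y ≠ Set.univ ∧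
      ∀ γ : Γ, EMetric.hausdorffEdist ((fun x => γ • x) '' Y) Y ≠ ⊤

section Aux
variable {X : Type*} [MetricSpace X] {m : X → X → X}

theorem bnpc_midpoint_unique (hW : IsWUC m) {a b z w : X}
    (hz1 : dist a z = dist a b / 2) (hz2 : dist b z = dist a b / 2)
    (hw1 : dist a w = dist a b / 2) (hw2 : dist b w = dist a b / 2) : z = w := by
  rcases eq_or_ne (dist a b) 0 with hab | hab
  · have hz : a = z := dist_eq_zero.mp (by rw [hz1, hab]; ring)
    have hw : a = w := dist_eq_zero.mp (by rw [hw1, hab]; ring)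
    rw [← hz, ← hw]
  · have hr : 0 < dist a b / 2 := by
      have := dist_nonneg (x := a) (y := b)
      rcases this.lt_or_eq with h | h
      · linarith
      · exact absurd h.symm hab
    by_contra hzw
    have hzwpos : 0 < dist z w := dist_pos.mpr hzw
    set r : ℝ := dist a b / 2 with hrdef
    set ε : ℝ := dist z w / r with hedef
    have hεpos : 0 < ε := div_pos hzwpos hr
    obtain ⟨δ₁, hδ₁, H₁⟩ := hW a ε r hεpos hr
    obtain ⟨δ₂, hδ₂, H₂⟩ := hW b ε r hεpos hr
    have hεr : ε * r ≤ dist z w := by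
      rw [hedef, div_mul_cancel₀ _ hr.ne']
    have h1 := H₁ z w hz1.le hw1.le hεr
    have h2 := H₂ z w hz2.le hw2.le hεr
    have htri := dist_triangle a (m z w) b
    rw [dist_comm (m z w) b] at htri
    have : dist a b = 2 * r := by rw [hrdef]; ring
    linarith

theorem iso_midpoint (hm : IsMidpointMap m) (hW : IsWUC m) {g : X → X}
    (hg : Isometry g) (a b : X) : g (m a b) = m (g a) (g b) := by
  have hd : dist (g a) (g b) = dist a b := hg.dist_eq a b
  refine bnpc_midpoint_unique hW (a := g a) (b := g b) ?_ ?_ ?_ ?_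
  · rw [hg.dist_eq, hd]; exact (hm a b).1
  · rw [hg.dist_eq, hd]; exact (hm a b).2
  · exact (hm (g a) (g b)).1
  · exact (hm (g a) (g b)).2

def mHullSeq (m : X → X → X) (A : Set X) : ℕ → Set X
  | 0 => A
  | n + 1 => mHullSeq m A n ∪ Set.image2 m (mHullSeq m A n) (mHullSeq m A n)

def mHull (m : X → X → X) (A : Set X) : Set X := ⋃ n, mHullSeq m A n

omit [MetricSpace X] in
theorem mHullSeq_mono (m : X → X → X) (A : Set X) : Monotone (mHullSeq m A) :=
  monotone_nat_of_le_succ fun _ => Set.subset_union_left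

omit [MetricSpace X] in
theorem subset_mHull (m : X → X → X) (A : Set X) : A ⊆ mHull m A :=
  Set.subset_iUnion (mHullSeq m A) 0

theorem mconvex_mHull (m : X → X → X) (A : Set X) : MConvex m (mHull m A) := by
  intro y₁ h₁ y₂ h₂
  obtain ⟨s₁, ⟨n₁, rfl⟩, hy₁⟩ := h₁
  obtain ⟨s₂, ⟨n₂, rfl⟩, hy₂⟩ := h₂
  have h₁' : y₁ ∈ mHullSeq m A (max n₁ n₂) := mHullSeq_mono m A (le_max_left _ _) hy₁
  have h₂' : y₂ ∈ mHullSeq m A (max n₁ n₂) := mHullSeq_mono m A (le_max_right _ _) hy₂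
  exact Set.mem_iUnion.mpr ⟨max n₁ n₂ + 1, Or.inr (Set.mem_image2_of_mem h₁' h₂')⟩

theorem le_on_closure_mHull {φ : X → ℝ} {A : Set X} {c : ℝ}
    (hconv : ∀ a b : X, φ (m a b) ≤ (φ a + φ b) / 2) (hcont : Continuous φ)
    (hA : ∀ a ∈ A, φ a ≤ c) : ∀ x ∈ closure (mHull m A), φ x ≤ c := by
  have hseq : ∀ n, ∀ x ∈ mHullSeq m A n, φ x ≤ c := by
    intro n
    induction n with
    | zero => exact hA
    | succ k ih =>
      rintro x (hx | hx)
      · exact ih x hx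
      · obtain ⟨a, ha, b, hb, rfl⟩ := hx
        have := hconv a b
        have h1 := ih a ha
        have h2 := ih b hb
        linarith
  have hhull : mHull m A ⊆ {x | φ x ≤ c} := by
    rintro x hx
    obtain ⟨s, ⟨n, rfl⟩, hx⟩ := hx
    exact hseq n x hx
  intro x hx
  exact closure_minimal hhull (isClosed_le hcont continuous_const) hx

theorem mHullSeq_approx (hB : IsBNPC m) {A B : Set X} {r : ℝ}
    (h : ∀ a ∈ A, ∃ b ∈ B, dist a b ≤ r) :
    ∀ n, ∀ x ∈ mHullSeq m A n, ∃ y ∈ mHullSeq m B n, dist x y ≤ r := by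
  intro n
  induction n with
  | zero => exact h
  | succ k ih =>
    rintro x (hx | hx)
    · obtain ⟨y, hy, hd⟩ := ih x hx
      exact ⟨y, Or.inl hy, hd⟩
    · obtain ⟨a, ha, b, hb, rfl⟩ := hx
      obtain ⟨a', ha', hda⟩ := ih a ha
      obtain ⟨b', hb', hdb⟩ := ih b hb
      refine ⟨m a' b', Or.inr (Set.mem_image2_of_mem ha' hb'), ?_⟩
      have := hB a b a' b'
      linarith

theorem hd_closure_mHull_le (hB : IsBNPC m) {A B : Set X} {r : ℝ}
    (h1 : ∀ a ∈ A, ∃ b ∈ B, dist a b ≤ r) (h2 : ∀ b ∈ B, ∃ a ∈ A, dist b a ≤ r) :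
    EMetric.hausdorffEdist (closure (mHull m A)) (closure (mHull m B)) ≤ ENNReal.ofReal r := by
  unfold EMetric.hausdorffEdist
  rw [EMetric.hausdorffEdist_closure]
  apply EMetric.hausdorffEdist_le_of_mem_edist
  · rintro x hx
    obtain ⟨s, ⟨n, rfl⟩, hx⟩ := hx
    obtain ⟨y, hy, hd⟩ := mHullSeq_approx hB h1 n x hx
    exact ⟨y, Set.mem_iUnion.mpr ⟨n, hy⟩, by rw [edist_dist]; exact ENNReal.ofReal_le_ofReal hd⟩
  · rintro x hx
    obtain ⟨s, ⟨n, rfl⟩, hx⟩ := hx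
    obtain ⟨y, hy, hd⟩ := mHullSeq_approx hB h2 n x hx
    exact ⟨y, Set.mem_iUnion.mpr ⟨n, hy⟩, by rw [edist_dist]; exact ENNReal.ofReal_le_ofReal hd⟩

omit [MetricSpace X] in
theorem image_mHull {g : X → X} (hgm : ∀ a b : X, g (m a b) = m (g a) (g b)) (A : Set X) :
    g '' mHull m A = mHull m (g '' A) := by
  have hseq : ∀ n, g '' mHullSeq m A n = mHullSeq m (g '' A) n := by
    intro n
    induction n with
    | zero => rfl
    | succ k ih =>
      show g '' (_ ∪ _) = _ ∪ _
      rw [Set.image_union, ih, Set.image_image2, ← ih, Set.image2_image_left,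
        Set.image2_image_right]
      congr 1
      ext x
      constructor
      · rintro ⟨a, ha, b, hb, rfl⟩
        exact ⟨a, ha, b, hb, (hgm a b).symm⟩
      · rintro ⟨a, ha, b, hb, rfl⟩
        exact ⟨a, ha, b, hb, hgm a b⟩
  rw [mHull, Set.image_iUnion]
  exact Set.iUnion_congr hseq

theorem mconvex_closure (hB : IsBNPC m) {C : Set X} (hC : MConvex m C) :
    MConvex m (closure C) := by
  have hcont : Continuous fun p : X × X => m p.1 p.2 := by
    refine LipschitzWith.continuous (K := 1) (LipschitzWith.of_dist_le_mul fun p q => ?_)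
    have h := hB p.1 p.2 q.1 q.2
    have h1 : dist p.1 q.1 ≤ dist p q := by rw [Prod.dist_eq]; exact le_max_left _ _
    have h2 : dist p.2 q.2 ≤ dist p q := by rw [Prod.dist_eq]; exact le_max_right _ _
    rw [NNReal.coe_one, one_mul]
    linarith
  intro y₁ h₁ y₂ h₂
  rw [mem_closure_iff_seq_limit] at h₁ h₂ ⊢
  obtain ⟨u, hu, hul⟩ := h₁
  obtain ⟨v, hv, hvl⟩ := h₂
  refine ⟨fun n => m (u n) (v n), fun n => hC _ (hu n) _ (hv n), ?_⟩
  have : Filter.Tendsto (fun n => (u n, v n)) Filter.atTop (nhds (y₁, y₂)) :=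
    hul.prodMk_nhds hvl
  exact ((hcont.tendsto (y₁, y₂)).comp this : _)

end Aux

theorem stmt_7 {X : Type*} [MetricSpace X] [CompleteSpace X] (m : X → X → X)
    (hm : IsMidpointMap m) (hB : IsBNPC m) (hW : IsWUC m)
    (hCL : ∀ T : X → X, IsClifford T → T = id)
    (Γ : Type*) [Group Γ] [MulAction Γ X]
    (hiso : ∀ γ : Γ, Isometry fun x : X => γ • x)
    (hnt : ∃ (γ : Γ) (x : X), γ • x ≠ x)
    (S : Finset Γ) (hgen : Subgroup.closure (S : Set Γ) = ⊤)
    (hred : ReducedAction Γ m) :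
    Filter.Tendsto (displ S) (Bornology.cobounded X) Filter.atTop := by
  classical
  by_cases hXb : Bornology.IsBounded (Set.univ : Set X)
  · rw [Filter.tendsto_def]
    intro s _
    rw [← Bornology.isCobounded_def, ← Bornology.isBounded_compl_iff]
    exact hXb.subset (Set.subset_univ _)
  -- basic facts about displacement
  have hdispl_le : ∀ (x : X) (σ : Γ), σ ∈ S → dist (σ • x) x ≤ displ S x := by
    intro x σ hσ
    unfold displ
    exact (Finset.le_fold_max _).mpr (Or.inr ⟨σ, hσ, le_rfl⟩)
  have hdispl_nonneg : ∀ x : X, 0 ≤ displ S x := by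
    intro x
    unfold displ
    exact (Finset.le_fold_max _).mpr (Or.inl le_rfl)
  -- image of closure under the action
  have himg : ∀ (γ : Γ) (s : Set X),
      (fun x : X => γ • x) '' closure s = closure ((fun x : X => γ • x) '' s) := by
    intro γ s
    exact Homeomorph.image_closure
      ⟨MulAction.toPerm γ, (hiso γ).continuous, (hiso γ⁻¹).continuous⟩ s
  have hcomm : ∀ (γ : Γ) (a b : X), γ • m a b = m (γ • a) (γ • b) := by
    intro γ a b
    exact iso_midpoint hm hW (hiso γ) a b
  -- negation of the goal
  rw [Filter.tendsto_atTop]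
  by_contra hT
  push_neg at hT
  obtain ⟨b, hb⟩ := hT
  set A : Set X := {x : X | displ S x < b} with hAdef
  have hA : ¬ Bornology.IsBounded A := by
    intro hbd
    apply hb
    rw [Filter.eventually_iff, ← Bornology.isCobounded_def, ← Bornology.isBounded_compl_iff]
    have : {x : X | b ≤ displ S x}ᶜ = A := by
      ext x
      simp [hAdef, not_le]
    simp only [not_lt]
    rw [this]
    exact hbd
  have hAne : A.Nonempty := by
    rcases Set.eq_empty_or_nonempty A with h | h
    · exact absurd (h ▸ Bornology.isBounded_empty) hA
    · exact h
  have hb0 : 0 ≤ b := by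
    obtain ⟨a, ha⟩ := hAne
    exact le_of_lt (lt_of_le_of_lt (hdispl_nonneg a) ha)
  -- STEP I : the displacement of each generator is bounded by b everywhere
  have hglob : ∀ σ ∈ S, ∀ x : X, dist (σ • x) x ≤ b := by
    have hAb : ∀ σ ∈ S, ∀ a ∈ A, dist (σ • a) a ≤ b := by
      intro σ hσ a ha
      exact le_of_lt (lt_of_le_of_lt (hdispl_le a σ hσ) ha)
    set Y : Set X := closure (mHull m A) with hYdef
    have hYunb : ¬ Bornology.IsBounded Y := by
      intro hbd
      exact hA (hbd.subset ((subset_mHull m A).trans subset_closure))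
    have hYuniv : Y = Set.univ := by
      by_contra hne
      apply hred
      refine ⟨Y, hYunb, isClosed_closure, mconvex_closure hB (mconvex_mHull m A), hne, ?_⟩
      -- finiteness of the Hausdorff distance, by induction on the word
      have himY : ∀ γ : Γ, (fun x : X => γ • x) '' Y
          = closure (mHull m ((fun x : X => γ • x) '' A)) := by
        intro γ
        rw [hYdef, himg γ, image_mHull (hcomm γ) A]
      have hmem : ∀ σ ∈ S,
          EMetric.hausdorffEdist ((fun x : X => σ • x) '' Y) Y ≠ ⊤ := by
        intro σ hσ
        rw [himY σ, hYdef]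
        have h1 : ∀ u ∈ (fun x : X => σ • x) '' A, ∃ v ∈ A, dist u v ≤ b := by
          rintro u ⟨a, ha, rfl⟩
          exact ⟨a, ha, hAb σ hσ a ha⟩
        have h2 : ∀ v ∈ A, ∃ u ∈ (fun x : X => σ • x) '' A, dist v u ≤ b := by
          intro v hv
          exact ⟨σ • v, Set.mem_image_of_mem _ hv, by rw [dist_comm]; exact hAb σ hσ v hv⟩
        exact (lt_of_le_of_lt (hd_closure_mHull_le hB h1 h2) ENNReal.ofReal_lt_top).ne
      intro γ
      have hγ : γ ∈ Subgroup.closure (S : Set Γ) := by rw [hgen]; exact Subgroup.mem_top γ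
      induction hγ using Subgroup.closure_induction with
      | mem σ hσ => exact hmem σ hσ
      | one =>
        have : (fun x : X => (1 : Γ) • x) '' Y = Y := by simp [one_smul]
        unfold EMetric.hausdorffEdist
        rw [this, EMetric.hausdorffEdist_self]
        exact ENNReal.zero_ne_top
      | mul γ δ hγm hδm ihγ ihδ =>
        have himage : (fun x : X => (γ * δ) • x) '' Y
            = (fun x : X => γ • x) '' ((fun x : X => δ • x) '' Y) := by
          rw [← Set.image_comp]
          simp [Function.comp_def, mul_smul]
        have htri := EMetric.hausdorffEdist_triangle
          (s := (fun x : X => γ • x) '' ((fun x : X => δ • x) '' Y))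
          (t := (fun x : X => γ • x) '' Y) (u := Y)
        have heq : EMetric.hausdorffEdist
            ((fun x : X => γ • x) '' ((fun x : X => δ • x) '' Y))
            ((fun x : X => γ • x) '' Y)
            = EMetric.hausdorffEdist ((fun x : X => δ • x) '' Y) Y :=
          EMetric.hausdorffEdist_image (hiso γ)
        unfold EMetric.hausdorffEdist at heq ihγ ihδ ⊢
        rw [himage]
        rw [heq] at htri
        exact ne_top_of_le_ne_top (ENNReal.add_ne_top.mpr ⟨ihδ, ihγ⟩) htri
      | inv γ hγm ihγ =>
        have h1 : (fun x : X => γ • x) '' ((fun x : X => γ⁻¹ • x) '' Y) = Y := by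
          rw [← Set.image_comp]
          simp [Function.comp_def, smul_inv_smul]
        have h2 : EMetric.hausdorffEdist
            ((fun x : X => γ • x) '' ((fun x : X => γ⁻¹ • x) '' Y))
            ((fun x : X => γ • x) '' Y)
            = EMetric.hausdorffEdist ((fun x : X => γ⁻¹ • x) '' Y) Y :=
          EMetric.hausdorffEdist_image (hiso γ)
        rw [h1] at h2
        unfold EMetric.hausdorffEdist at h2 ihγ ⊢
        rw [← h2, EMetric.hausdorffEdist_comm]
        exact ihγ
    -- convexity and continuity give the bound everywhere
    intro σ hσ x
    have hx : x ∈ Y := by rw [hYuniv]; trivial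
    refine le_on_closure_mHull (φ := fun x => dist (σ • x) x) ?_ ?_ (hAb σ hσ) x hx
    · intro a' b'
      calc dist (σ • m a' b') (m a' b') = dist (m (σ • a') (σ • b')) (m a' b') := by
            rw [hcomm σ a' b']
        _ ≤ (dist (σ • a') a' + dist (σ • b') b') / 2 := hB _ _ _ _
    · exact (hiso σ).continuous.dist continuous_id
  -- every group element has uniformly bounded displacement
  have hCbound : ∀ γ : Γ, ∃ C : ℝ, 0 ≤ C ∧ ∀ x : X, dist (γ • x) x ≤ C := by
    intro γ
    have hγ : γ ∈ Subgroup.closure (S : Set Γ) := by rw [hgen]; exact Subgroup.mem_top γ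
    induction hγ using Subgroup.closure_induction with
    | mem σ hσ => exact ⟨b, hb0, hglob σ hσ⟩
    | one => exact ⟨0, le_rfl, fun x => by simp⟩
    | mul γ δ hγm hδm ihγ ihδ =>
      obtain ⟨C₁, hC₁0, hC₁⟩ := ihγ
      obtain ⟨C₂, hC₂0, hC₂⟩ := ihδ
      refine ⟨C₁ + C₂, by linarith, fun x => ?_⟩
      calc dist ((γ * δ) • x) x = dist (γ • δ • x) x := by rw [mul_smul]
        _ ≤ dist (γ • δ • x) (δ • x) + dist (δ • x) x := dist_triangle _ _ _
        _ ≤ C₁ + C₂ := add_le_add (hC₁ _) (hC₂ _)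
    | inv γ hγm ihγ =>
      obtain ⟨C, hC0, hC⟩ := ihγ
      refine ⟨C, hC0, fun x => ?_⟩
      calc dist (γ⁻¹ • x) x = dist (γ • γ⁻¹ • x) (γ • x) := ((hiso γ).dist_eq _ _).symm
        _ = dist x (γ • x) := by rw [smul_inv_smul]
        _ = dist (γ • x) x := dist_comm _ _
        _ ≤ C := hC x
  -- STEP II : some element has non-constant displacement
  have hXne : Nonempty X := by
    by_contra hemp
    rw [not_nonempty_iff] at hemp
    exact hXb (by rw [Set.univ_eq_empty_iff.mpr hemp]; exact Bornology.isBounded_empty)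
  have hg : ∃ (g : Γ) (p q : X), dist (g • p) p < dist (g • q) q := by
    by_contra hcon
    push_neg at hcon
    obtain ⟨γ₀, x₀, hx₀⟩ := hnt
    apply hx₀
    have hconst : ∀ x y : X, dist (γ₀ • x) x = dist (γ₀ • y) y := fun x y =>
      le_antisymm (hcon γ₀ y x) (hcon γ₀ x y)
    have hcliff : IsClifford (fun x : X => γ₀ • x) := by
      refine ⟨(MulAction.toPerm γ₀).surjective, hiso γ₀, ⟨dist (γ₀ • Classical.arbitrary X)
        (Classical.arbitrary X), fun x => ?_⟩⟩
      rw [dist_comm]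
      exact hconst x (Classical.arbitrary X)
    have := hCL _ hcliff
    exact congrFun this x₀
  obtain ⟨g, p, q, hpq⟩ := hg
  obtain ⟨C, hC0, hC⟩ := hCbound g
  set f : X → ℝ := fun x => dist (g • x) x with hfdef
  have hfconv : ∀ a' b' : X, f (m a' b') ≤ (f a' + f b') / 2 := by
    intro a' b'
    calc dist (g • m a' b') (m a' b') = dist (m (g • a') (g • b')) (m a' b') := by
          rw [hcomm g a' b']
      _ ≤ (dist (g • a') a' + dist (g • b') b') / 2 := hB _ _ _ _
  have hfcont : Continuous f := (hiso g).continuous.dist continuous_id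
  have hrange_ne : (Set.range f).Nonempty := ⟨f p, Set.mem_range_self p⟩
  have hbdd : BddAbove (Set.range f) := ⟨C, by rintro _ ⟨x, rfl⟩; exact hC x⟩
  set F : ℝ := sSup (Set.range f) with hFdef
  have hqF : f q ≤ F := le_csSup hbdd (Set.mem_range_self q)
  have hpF : f p < F := lt_of_lt_of_le hpq hqF
  set t₀ : ℝ := (f p + F) / 2 with ht₀def
  have ht₀F : t₀ < F := by rw [ht₀def]; linarith
  set A' : Set X := Set.range fun x : X => m p x with hA'def
  have hfA' : ∀ y ∈ A', f y ≤ t₀ := by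
    rintro _ ⟨x, rfl⟩
    have h1 := hfconv p x
    have h2 : f x ≤ F := le_csSup hbdd (Set.mem_range_self x)
    rw [ht₀def]
    linarith
  have hmp : ∀ x : X, dist p (m p x) = dist p x / 2 := fun x => (hm p x).1
  set Y' : Set X := closure (mHull m A') with hY'def
  have hY'univ : Y' = Set.univ := by
    by_contra hne
    apply hred
    refine ⟨Y', ?_, isClosed_closure, mconvex_closure hB (mconvex_mHull m A'), hne, ?_⟩
    · -- Y' is unbounded
      intro hbd
      have hA'b : Bornology.IsBounded A' :=
        hbd.subset ((subset_mHull m A').trans subset_closure)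
      rw [Metric.isBounded_iff] at hA'b
      obtain ⟨C', hC'⟩ := hA'b
      have hpA' : p ∈ A' := by
        refine ⟨p, ?_⟩
        have : dist p (m p p) = 0 := by rw [hmp p]; simp
        exact (dist_eq_zero.mp this).symm
      have hdp : ∀ x : X, dist p x ≤ 2 * C' := by
        intro x
        have := hC' hpA' (Set.mem_range_self x)
        rw [hmp x] at this
        linarith
      apply hXb
      rw [Metric.isBounded_iff]
      refine ⟨2 * C' + 2 * C', fun x _ y _ => ?_⟩
      calc dist x y ≤ dist x p + dist p y := dist_triangle _ _ _
        _ ≤ 2 * C' + 2 * C' := by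
            have h1 := hdp x
            have h2 := hdp y
            rw [dist_comm x p]
            linarith
    · -- finite Hausdorff distance to every translate
      intro γ
      obtain ⟨Cγ, hCγ0, hCγ⟩ := hCbound γ
      have himY : (fun x : X => γ • x) '' Y'
          = closure (mHull m ((fun x : X => γ • x) '' A')) := by
        rw [hY'def, himg γ, image_mHull (hcomm γ) A']
      rw [himY, hY'def]
      have h1 : ∀ u ∈ (fun x : X => γ • x) '' A', ∃ v ∈ A', dist u v ≤ Cγ := by
        rintro _ ⟨_, ⟨x, rfl⟩, rfl⟩
        refine ⟨m p (γ • x), ⟨γ • x, rfl⟩, ?_⟩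
        show dist (γ • m p x) (m p (γ • x)) ≤ Cγ
        rw [hcomm γ p x]
        have := hB (γ • p) (γ • x) p (γ • x)
        have h2 := hCγ p
        simp only [dist_self] at this
        linarith
      have h2 : ∀ v ∈ A', ∃ u ∈ (fun x : X => γ • x) '' A', dist v u ≤ Cγ := by
        rintro _ ⟨x, rfl⟩
        refine ⟨γ • m p (γ⁻¹ • x), Set.mem_image_of_mem _ ⟨γ⁻¹ • x, rfl⟩, ?_⟩
        show dist (m p x) (γ • m p (γ⁻¹ • x)) ≤ Cγ
        rw [hcomm γ p (γ⁻¹ • x), smul_inv_smul]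
        have := hB p x (γ • p) x
        have h3 := hCγ p
        rw [dist_comm (γ • p) p] at h3
        simp only [dist_self] at this
        linarith
      exact (lt_of_le_of_lt (hd_closure_mHull_le hB h1 h2) ENNReal.ofReal_lt_top).ne
  -- conclusion : f ≤ t₀ everywhere, contradicting t₀ < F = sup f
  have hall : ∀ x : X, f x ≤ t₀ := by
    intro x
    have hx : x ∈ Y' := by rw [hY'univ]; trivial
    exact le_on_closure_mHull hfconv hfcont hfA' x hx
  have hFt₀ : F ≤ t₀ := csSup_le hrange_ne (by rintro _ ⟨x, rfl⟩; exact hall x)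
  linarith
end

section
/- Let X be an unbounded metric space equipped with a midpoint map m, and let f : X → ℝ be convex, bounded, and non-constant. Then f has an unbounded proper sublevel set: there exists a ∈ ℝ such that the set {x ∈ X : f(x) ≤ a} is unbounded and is not all of X. -/
/-!
If `f ≤ c` everywhere, convexity puts every midpoint `m z y` into the sublevel set
`{f ≤ (f z + c) / 2}`, and these midpoints are unbounded because `d(z, m z y) = d(z, y) / 2`.
Taking `c = sup f` and `f z < sup f` (possible as `f` is not constant) makes the level
`(f z + sup f) / 2` lie strictly below `sup f`, so this sublevel set is not all of `X`.
-/

open Bornology Metric Set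

section MidpointConvex

variable {X : Type*} [MetricSpace X] {m : X → X → X}

theorem IsMidpointMap.not_isBounded_range (hm : IsMidpointMap m)
    (hX : ¬ IsBounded (univ : Set X)) (z : X) : ¬ IsBounded (range (m z)) := by
  intro hbdd
  obtain ⟨R, hR⟩ := (isBounded_iff_subset_closedBall z).mp hbdd
  refine hX ((isBounded_closedBall (x := z) (r := 2 * R)).subset fun y _ => ?_)
  have hmid : dist (m z y) z ≤ R := hR (mem_range_self y)
  rw [dist_comm, (hm z y).1] at hmid
  rw [mem_closedBall, dist_comm]
  linarith

theorem MConvexFun.range_subset_sublevel {f : X → ℝ} (hconv : MConvexFun m f) {c : ℝ}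
    (hc : ∀ x, f x ≤ c) (z : X) : range (m z) ⊆ {x | f x ≤ (f z + c) / 2} := by
  rintro _ ⟨y, rfl⟩
  exact (hconv z y).trans (by linarith [hc y])

theorem MConvexFun.not_isBounded_sublevel {f : X → ℝ} (hm : IsMidpointMap m)
    (hconv : MConvexFun m f) (hX : ¬ IsBounded (univ : Set X)) {c : ℝ}
    (hc : ∀ x, f x ≤ c) (z : X) : ¬ IsBounded {x | f x ≤ (f z + c) / 2} :=
  fun hbdd => hm.not_isBounded_range hX z (hbdd.subset (hconv.range_subset_sublevel hc z))

theorem exists_lt_ciSup_of_ne {ι : Type*} {f : ι → ℝ} (hf : BddAbove (range f)) {x y : ι}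
    (hxy : f x ≠ f y) : ∃ z, f z < ⨆ i, f i := by
  rcases hxy.lt_or_gt with hlt | hlt
  · exact ⟨x, hlt.trans_le (le_ciSup hf y)⟩
  · exact ⟨y, hlt.trans_le (le_ciSup hf x)⟩

end MidpointConvex

theorem stmt_8 {X : Type*} [MetricSpace X]
    (hX : ¬ Bornology.IsBounded (Set.univ : Set X))
    (m : X → X → X) (hm : IsMidpointMap m)
    (f : X → ℝ) (hconv : MConvexFun m f)
    (hbdd : ∃ M : ℝ, ∀ x : X, |f x| ≤ M)
    (hnc : ∃ x y : X, f x ≠ f y) :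
    ∃ a : ℝ, ¬ Bornology.IsBounded {x : X | f x ≤ a} ∧ {x : X | f x ≤ a} ≠ Set.univ := by
  obtain ⟨M, hM⟩ := hbdd
  obtain ⟨x, y, hxy⟩ := hnc
  have hbddAbove : BddAbove (range f) := ⟨M, by rintro _ ⟨x, rfl⟩; exact (abs_le.mp (hM x)).2⟩
  have : Nonempty X := ⟨x⟩
  obtain ⟨z, hz⟩ := exists_lt_ciSup_of_ne hbddAbove hxy
  obtain ⟨w, hw⟩ : ∃ w, (f z + ⨆ i, f i) / 2 < f w :=
    exists_lt_of_lt_ciSup (by linarith)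
  refine ⟨(f z + ⨆ i, f i) / 2,
    hconv.not_isBounded_sublevel hm hX (le_ciSup hbddAbove) z, ?_⟩
  exact ne_univ_iff_exists_notMem _ |>.mpr ⟨w, hw.not_ge⟩
end

section
/- Let X be a complete metric space equipped with a midpoint map m, and assume (X,m) is Busemann non-positively curved and weakly uniformly convex. Then every nonempty bounded subset A ⊆ X has a unique circumcenter: there is a unique point x ∈ X minimizing the function y ↦ sup_{a∈A} d(y,a) over X. -/
set_option maxHeartbeats 2000000
set_option linter.unusedVariables false

section CircProof
variable {X : Type*} [MetricSpace X]

private lemma pull_in {m : X → X → X} (hm : IsMidpointMap m) (hB : IsBNPC m) (z y : X) (l : ℕ) :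
    ∃ y', dist y y' = (1/2 : ℝ)^l * dist y z ∧ dist z y' ≤ (1 - (1/2 : ℝ)^l) * dist z y := by
  induction l with
  | zero => exact ⟨z, by simp, by simp⟩
  | succ l ih =>
    obtain ⟨w', h1, h2⟩ := ih
    refine ⟨m y w', ?_, ?_⟩
    · have h3 := (hm y w').1
      rw [h3, h1]; ring
    · have h0 : dist z (m z z) = 0 := by
        have := (hm z z).1; simpa using this
      have h4 : dist z (m y w') ≤ (dist z y + dist z w') / 2 := by
        calc dist z (m y w') ≤ dist z (m z z) + dist (m z z) (m y w') := dist_triangle _ _ _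
          _ ≤ 0 + (dist z y + dist z w') / 2 := add_le_add h0.le (hB z z y w')
          _ = (dist z y + dist z w') / 2 := by ring
      calc dist z (m y w') ≤ (dist z y + dist z w') / 2 := h4
        _ ≤ (dist z y + (1 - (1/2:ℝ)^l) * dist z y) / 2 := by linarith
        _ = (1 - (1/2:ℝ)^(l+1)) * dist z y := by ring

variable {X : Type*} [MetricSpace X]

private lemma dist_mid_le' {m : X → X → X} (hm : IsMidpointMap m) (hB : IsBNPC m) (z x y : X) :
    dist z (m x y) ≤ (dist z x + dist z y) / 2 := by
  have h0 : dist z (m z z) = 0 := by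
    have := (hm z z).1; simpa using this
  calc dist z (m x y) ≤ dist z (m z z) + dist (m z z) (m x y) := dist_triangle _ _ _
    _ ≤ 0 + (dist z x + dist z y) / 2 := add_le_add h0.le (hB z z x y)
    _ = (dist z x + dist z y) / 2 := by ring

private noncomputable def circ (A : Set X) (x : X) : ℝ := sSup ((fun a => dist x a) '' A)

private lemma circ_bdd {A : Set X} (hA : A.Nonempty) (hAb : Bornology.IsBounded A) (x : X) :
    BddAbove ((fun a => dist x a) '' A) := by
  obtain ⟨C, hC⟩ := Metric.isBounded_iff.1 hAb
  obtain ⟨a0, ha0⟩ := hA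
  refine ⟨dist x a0 + C, ?_⟩
  rintro r ⟨a, ha, rfl⟩
  calc dist x a ≤ dist x a0 + dist a0 a := dist_triangle _ _ _
    _ ≤ dist x a0 + C := by have := hC ha0 ha; linarith

private lemma dist_le_circ {A : Set X} (hA : A.Nonempty) (hAb : Bornology.IsBounded A)
    {a : X} (ha : a ∈ A) (x : X) : dist x a ≤ circ A x :=
  le_csSup (circ_bdd hA hAb x) ⟨a, ha, rfl⟩

private lemma circ_le {A : Set X} (hA : A.Nonempty) {x : X} {c : ℝ}
    (h : ∀ a ∈ A, dist x a ≤ c) : circ A x ≤ c := by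
  apply csSup_le (hA.image _)
  rintro r ⟨a, ha, rfl⟩; exact h a ha

private lemma circ_nonneg {A : Set X} (hA : A.Nonempty) (hAb : Bornology.IsBounded A) (x : X) :
    0 ≤ circ A x := by
  obtain ⟨a0, ha0⟩ := hA
  exact le_trans dist_nonneg (dist_le_circ ⟨a0, ha0⟩ hAb ha0 x)

private lemma circ_lipschitz {A : Set X} (hA : A.Nonempty) (hAb : Bornology.IsBounded A)
    (x y : X) : circ A x ≤ dist x y + circ A y := by
  apply circ_le hA
  intro a ha
  calc dist x a ≤ dist x y + dist y a := dist_triangle _ _ _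
    _ ≤ dist x y + circ A y := by linarith [dist_le_circ hA hAb ha y]

private lemma exists_far {A : Set X} (hA : A.Nonempty) {x : X} {c : ℝ}
    (h : c < circ A x) : ∃ a ∈ A, c < dist x a := by
  obtain ⟨r, ⟨a, ha, rfl⟩, hr⟩ := exists_lt_of_lt_csSup (hA.image _) h
  exact ⟨a, ha, hr⟩

private lemma circ_mid_le {A : Set X} (hA : A.Nonempty) (hAb : Bornology.IsBounded A)
    {m : X → X → X} (hm : IsMidpointMap m) (hB : IsBNPC m)
    (x y : X) : circ A (m x y) ≤ (circ A x + circ A y) / 2 := by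
  apply circ_le hA
  intro a ha
  calc dist (m x y) a ≤ (dist a x + dist a y) / 2 := by
        rw [dist_comm]; exact dist_mid_le' hm hB a x y
    _ ≤ (circ A x + circ A y) / 2 := by
        have h1 := dist_le_circ hA hAb ha x
        have h2 := dist_le_circ hA hAb ha y
        rw [dist_comm a x, dist_comm a y]
        linarith

variable {X : Type*} [MetricSpace X]

private noncomputable def Useq (m : X → X → X) (u a0 : X) : ℕ → X
  | 0 => a0
  | k+1 => m u (Useq m u a0 k)

private noncomputable def sigf (m : X → X → X) (u v a0 : X) (k : ℕ) : ℝ :=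
  dist (m u (Useq m u a0 k)) (m (Useq m u a0 k) v)

private noncomputable def Rseq (r : ℝ) (σ : ℕ → ℝ) : ℕ → ℝ
  | 0 => r
  | k+1 => Rseq r σ k / 2 + σ k

private noncomputable def Hseq (h0 : ℝ) (σ : ℕ → ℝ) : ℕ → ℝ
  | 0 => h0
  | k+1 => Hseq h0 σ k + 3/2 * σ k

private lemma sigf_nonneg (m : X → X → X) (u v a0 : X) (k : ℕ) : 0 ≤ sigf m u v a0 k :=
  dist_nonneg

private lemma Rseq_low {r : ℝ} {σ : ℕ → ℝ} (hσ : ∀ k, 0 ≤ σ k) :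
    ∀ k, r * (1/2)^k ≤ Rseq r σ k := by
  intro k
  induction k with
  | zero => simp [Rseq]
  | succ k ih =>
    have : Rseq r σ (k+1) = Rseq r σ k / 2 + σ k := rfl
    rw [this]
    have h1 : r * (1/2)^(k+1) = (r * (1/2)^k)/2 := by ring
    rw [h1]
    have := hσ k
    linarith

private lemma Rseq_high {r : ℝ} {σ : ℕ → ℝ} (hσ : ∀ k, 0 ≤ σ k) :
    ∀ k, Rseq r σ k ≤ r * (1/2)^k + ∑ i ∈ Finset.range k, σ i := by
  intro k
  induction k with
  | zero => simp [Rseq]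
  | succ k ih =>
    have hr : Rseq r σ (k+1) = Rseq r σ k / 2 + σ k := rfl
    rw [hr, Finset.sum_range_succ]
    have hsum : (0:ℝ) ≤ ∑ i ∈ Finset.range k, σ i := Finset.sum_nonneg (fun i _ => hσ i)
    have h1 : r * (1/2)^(k+1) = (r * (1/2)^k)/2 := by ring
    linarith

private lemma Hseq_eq (h0 : ℝ) (σ : ℕ → ℝ) :
    ∀ k, Hseq h0 σ k = h0 + 3/2 * ∑ i ∈ Finset.range k, σ i := by
  intro k
  induction k with
  | zero => simp [Hseq]
  | succ k ih =>
    have hr : Hseq h0 σ (k+1) = Hseq h0 σ k + 3/2 * σ k := rfl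
    rw [hr, Finset.sum_range_succ, ih]; ring

/-- The apex invariant, by induction on k. -/
private lemma apex_invariant {m : X → X → X} (hm : IsMidpointMap m) (hB : IsBNPC m)
    (u v a0 : X) (r η : ℝ)
    (h1 : dist u a0 ≤ r) (h2 : dist v a0 ≤ r) (h3 : r - η ≤ dist (m u v) a0) :
    ∀ k, dist u (Useq m u a0 k) ≤ Rseq r (sigf m u v a0) k ∧
      dist v (Useq m u a0 k) ≤ Rseq r (sigf m u v a0) k ∧
      Rseq r (sigf m u v a0) k - Hseq η (sigf m u v a0) k ≤ dist (m u v) (Useq m u a0 k) := by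
  intro k
  induction k with
  | zero =>
    refine ⟨h1, h2, ?_⟩
    have e : Hseq η (sigf m u v a0) 0 = η := rfl
    have e2 : Rseq r (sigf m u v a0) 0 = r := rfl
    rw [e, e2]
    exact h3
  | succ k ih =>
    obtain ⟨i1, i2, i3⟩ := ih
    set w := m u v with hw
    set Pk := Useq m u a0 k with hPk
    set p := m u Pk with hp
    set q := m Pk v with hq
    have hPsucc : Useq m u a0 (k+1) = p := rfl
    have hRsucc : Rseq r (sigf m u v a0) (k+1) = Rseq r (sigf m u v a0) k / 2 + sigf m u v a0 k := rfl
    have hHsucc : Hseq η (sigf m u v a0) (k+1) = Hseq η (sigf m u v a0) k + 3/2 * sigf m u v a0 k := rfl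
    have hσ : sigf m u v a0 k = dist p q := rfl
    set R := Rseq r (sigf m u v a0) k
    set H := Hseq η (sigf m u v a0) k
    set σ := sigf m u v a0 k
    -- midpoint facts
    have e1 : dist u p = dist u Pk / 2 := (hm u Pk).1
    have e2 : dist Pk p = dist u Pk / 2 := (hm u Pk).2
    have e3 : dist Pk q = dist Pk v / 2 := (hm Pk v).1
    have e4 : dist v q = dist Pk v / 2 := (hm Pk v).2
    have hvPk : dist Pk v = dist v Pk := dist_comm _ _
    -- kill facts
    have K3 : R/2 - H ≤ dist w (m p q) := by
      have t1 : dist Pk (m p q) ≤ (dist Pk p + dist Pk q)/2 := dist_mid_le' hm hB Pk p q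
      have t2 : dist Pk (m p q) ≤ R/2 := by
        rw [hvPk] at e3
        calc dist Pk (m p q) ≤ (dist Pk p + dist Pk q)/2 := t1
          _ = (dist u Pk/2 + dist v Pk/2)/2 := by rw [e2, e3]
          _ ≤ (R/2 + R/2)/2 := by
              have : dist u Pk ≤ R := i1
              have : dist v Pk ≤ R := i2
              gcongr <;> linarith [i1, i2]
          _ = R/2 := by ring
      have t3 : dist w Pk ≤ dist w (m p q) + dist (m p q) Pk := dist_triangle _ _ _
      have t4 : dist (m p q) Pk = dist Pk (m p q) := dist_comm _ _
      have t5 : R - H ≤ dist w Pk := i3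
      linarith
    -- invariant at k+1
    rw [hPsucc, hRsucc, hHsucc]
    refine ⟨?_, ?_, ?_⟩
    · -- dist u p ≤ R/2 + σ
      have : dist u Pk ≤ R := i1
      have hσnn : 0 ≤ σ := dist_nonneg
      rw [e1]; linarith
    · -- dist v p ≤ dist v q + σ ≤ R/2 + σ
      have t1 : dist v p ≤ dist v q + dist q p := dist_triangle _ _ _
      have t2 : dist q p = σ := by rw [dist_comm]; rfl
      rw [hvPk] at e4
      have : dist v Pk ≤ R := i2
      linarith
    · -- R/2 + σ - (H + 3/2 σ) ≤ dist w p
      have t1 : dist w (m p q) ≤ dist w p + dist p (m p q) := dist_triangle _ _ _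
      have t2 : dist p (m p q) = σ/2 := by
        have := (hm p q).1; rw [this, ← hσ]
      linarith [K3]

/-- The kill package at step k. -/
private lemma kill_package {m : X → X → X} (hm : IsMidpointMap m) (hB : IsBNPC m)
    (u v a0 : X) (r η : ℝ)
    (h1 : dist u a0 ≤ r) (h2 : dist v a0 ≤ r) (h3 : r - η ≤ dist (m u v) a0) (k : ℕ) :
    dist (m u v) (m u (Useq m u a0 k)) ≤ Rseq r (sigf m u v a0) k / 2 ∧
    dist (m u v) (m (Useq m u a0 k) v) ≤ Rseq r (sigf m u v a0) k / 2 ∧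
    Rseq r (sigf m u v a0) k / 2 - Hseq η (sigf m u v a0) k ≤
      dist (m u v) (m (m u (Useq m u a0 k)) (m (Useq m u a0 k) v)) := by
  obtain ⟨i1, i2, i3⟩ := apex_invariant hm hB u v a0 r η h1 h2 h3 k
  set w := m u v with hw
  set Pk := Useq m u a0 k with hPk
  set p := m u Pk with hp
  set q := m Pk v with hq
  set R := Rseq r (sigf m u v a0) k
  set H := Hseq η (sigf m u v a0) k
  have K1 : dist w p ≤ R/2 := by
    have := hB u v u Pk
    have h0 : dist u u = 0 := dist_self u
    have hcm : dist v Pk ≤ R := i2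
    calc dist w p ≤ (dist u u + dist v Pk)/2 := this
      _ ≤ (0 + R)/2 := by rw [h0]; linarith
      _ = R/2 := by ring
  have K2 : dist w q ≤ R/2 := by
    have := hB u v Pk v
    have h0 : dist v v = 0 := dist_self v
    have hcm : dist u Pk ≤ R := i1
    calc dist w q ≤ (dist u Pk + dist v v)/2 := this
      _ ≤ (R + 0)/2 := by rw [h0]; linarith
      _ = R/2 := by ring
  have K3 : R/2 - H ≤ dist w (m p q) := by
    have e2 : dist Pk p = dist u Pk / 2 := (hm u Pk).2
    have e3 : dist Pk q = dist Pk v / 2 := (hm Pk v).1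
    have hvPk : dist Pk v = dist v Pk := dist_comm _ _
    have t1 : dist Pk (m p q) ≤ (dist Pk p + dist Pk q)/2 := dist_mid_le' hm hB Pk p q
    have t2 : dist Pk (m p q) ≤ R/2 := by
      rw [hvPk] at e3
      calc dist Pk (m p q) ≤ (dist Pk p + dist Pk q)/2 := t1
        _ = (dist u Pk/2 + dist v Pk/2)/2 := by rw [e2, e3]
        _ ≤ (R/2 + R/2)/2 := by gcongr <;> linarith [i1, i2]
        _ = R/2 := by ring
    have t3 : dist w Pk ≤ dist w (m p q) + dist (m p q) Pk := dist_triangle _ _ _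
    have t4 : dist (m p q) Pk = dist Pk (m p q) := dist_comm _ _
    linarith [i3]
  exact ⟨K1, K2, K3⟩


variable {X : Type*} [MetricSpace X] [CompleteSpace X]

private lemma frac_mono {N n : ℕ} (h : N ≤ n) : (1:ℝ)/(↑n+1) ≤ 1/(↑N+1) := by
  have hc : (N:ℝ) ≤ n := Nat.cast_le.mpr h
  apply one_div_le_one_div_of_le (by positivity)
  linarith

private lemma exists_minimizer {m : X → X → X}
    (hm : IsMidpointMap m) (hB : IsBNPC m) (hW : IsWUC m)
    {A : Set X} (hA : A.Nonempty) (hAb : Bornology.IsBounded A) :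
    ∃ x : X, ∀ y : X, circ A x ≤ circ A y := by
  classical
  obtain ⟨a0, ha0⟩ := hA
  have hA' : A.Nonempty := ⟨a0, ha0⟩
  set f : X → ℝ := circ A with hf
  have hbdd : BddBelow (Set.range f) := by
    refine ⟨0, ?_⟩; rintro r ⟨y, rfl⟩; exact circ_nonneg hA' hAb y
  have hrne : (Set.range f).Nonempty := ⟨f a0, ⟨a0, rfl⟩⟩
  set rs : ℝ := sInf (Set.range f) with hrs
  have hrs_le : ∀ y, rs ≤ f y := fun y => csInf_le hbdd ⟨y, rfl⟩
  have hCne : ∀ n : ℕ, ∃ x, f x ≤ rs + 1/(n+1) := by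
    intro n
    have hpos : (0:ℝ) < 1/(n+1) := by positivity
    have hlt : rs < rs + 1/(n+1) := by linarith
    obtain ⟨r, ⟨x, rfl⟩, hr⟩ := exists_lt_of_csInf_lt hrne hlt
    exact ⟨x, hr.le⟩
  set D : ℕ → Set ℝ := fun n => (fun x => dist a0 x) '' {x | f x ≤ rs + 1/(n+1)} with hD
  have hDne : ∀ n, (D n).Nonempty := by
    intro n; obtain ⟨x, hx⟩ := hCne n; exact ⟨dist a0 x, x, hx, rfl⟩
  have hDbb : ∀ n, BddBelow (D n) := by
    intro n; refine ⟨0, ?_⟩; rintro r ⟨x, hx, rfl⟩; exact dist_nonneg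
  set d : ℕ → ℝ := fun n => sInf (D n) with hd
  have hd_nonneg : ∀ n, 0 ≤ d n := by
    intro n; exact le_csInf (hDne n) (by rintro r ⟨x, hx, rfl⟩; exact dist_nonneg)
  have hd_ub : ∀ n, d n ≤ rs + 1 := by
    intro n
    obtain ⟨x, hx⟩ := hCne n
    have h1 : dist a0 x ≤ f x := by rw [dist_comm]; exact dist_le_circ hA' hAb ha0 x
    have h2 : (1:ℝ)/(n+1) ≤ 1 := by
      have := frac_mono (Nat.zero_le n); simpa using this
    have := csInf_le (hDbb n) (⟨x, hx, rfl⟩ : dist a0 x ∈ D n)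
    simp only [hd]; linarith
  have hd_mono : Monotone d := by
    apply monotone_nat_of_le_succ
    intro n
    apply csInf_le_csInf (hDbb n) (hDne (n+1))
    rintro r ⟨x, hx, rfl⟩
    refine ⟨x, ?_, rfl⟩
    simp only [Set.mem_setOf_eq] at hx ⊢
    have h3 : (1:ℝ)/(↑(n+1)+1) ≤ 1/(↑n+1) := frac_mono (Nat.le_succ n)
    push_cast at h3 hx ⊢
    linarith
  have hdsup_bdd : BddAbove (Set.range d) := ⟨rs + 1, by rintro r ⟨n, rfl⟩; exact hd_ub n⟩
  set dS : ℝ := ⨆ n, d n with hdS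
  have hd_le_dS : ∀ n, d n ≤ dS := fun n => le_ciSup hdsup_bdd n
  have hdS_nonneg : 0 ≤ dS := le_trans (hd_nonneg 0) (hd_le_dS 0)
  have hpsel : ∀ n : ℕ, ∃ x, f x ≤ rs + 1/(n+1) ∧ dist a0 x < d n + 1/(n+1) := by
    intro n
    have hpos : (0:ℝ) < 1/(n+1) := by positivity
    obtain ⟨r, ⟨x, hx, rfl⟩, hr⟩ := exists_lt_of_csInf_lt (hDne n) (lt_add_of_pos_right (d n) hpos)
    exact ⟨x, hx, hr⟩
  choose p hp1 hp2 using hpsel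
  have hCauchy : CauchySeq p := by
    rw [Metric.cauchySeq_iff]
    intro σ hσ
    by_cases hds : dS ≤ 0
    · -- dS = 0 : points converge to a0
      have hds0 : dS = 0 := le_antisymm hds hdS_nonneg
      obtain ⟨N, hN⟩ := exists_nat_gt (2/σ)
      have hNσ : 2/((N:ℝ)+1) < σ := by
        rw [div_lt_iff₀ (by positivity)]
        rw [div_lt_iff₀ hσ] at hN
        have : (0:ℝ) ≤ N := Nat.cast_nonneg N
        nlinarith
      refine ⟨N, fun n hn k hk => ?_⟩
      have hdn : d n = 0 := le_antisymm (hds0 ▸ hd_le_dS n) (hd_nonneg n)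
      have hdk : d k = 0 := le_antisymm (hds0 ▸ hd_le_dS k) (hd_nonneg k)
      have e1 : dist a0 (p n) < 1/(↑n+1) := by have := hp2 n; rw [hdn] at this; linarith
      have e2 : dist a0 (p k) < 1/(↑k+1) := by have := hp2 k; rw [hdk] at this; linarith
      have e3 := frac_mono hn
      have e4 := frac_mono hk
      calc dist (p n) (p k) ≤ dist (p n) a0 + dist a0 (p k) := dist_triangle _ _ _
        _ = dist a0 (p n) + dist a0 (p k) := by rw [dist_comm]
        _ < 1/(↑N+1) + 1/(↑N+1) := by linarith
        _ = 2/((N:ℝ)+1) := by ring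
        _ < σ := hNσ
    · push_neg at hds
      -- main case: use WUC at a0 with radius dS
      obtain ⟨δ, hδpos, hδ⟩ := hW a0 (σ/(2*dS)) dS (by positivity) hds
      -- choose the pull-in depth l
      obtain ⟨l, hl⟩ := exists_pow_lt_of_lt_one
        (show (0:ℝ) < min σ δ / (8*(dS+1)) by positivity) (by norm_num : (1:ℝ)/2 < 1)
      set t : ℝ := (1/2)^l with ht
      have htpos : 0 < t := by positivity
      have htσ : t ≤ σ/(8*(dS+1)) := le_trans hl.le (by
        apply div_le_div_of_nonneg_right (min_le_left _ _) (by positivity))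
      have htδ : t ≤ δ/(8*(dS+1)) := le_trans hl.le (by
        apply div_le_div_of_nonneg_right (min_le_right _ _) (by positivity))
      have ht1 : t ≤ 1 := by
        rw [ht]; apply pow_le_one₀ (by norm_num) (by norm_num)
      -- choose N
      obtain ⟨N1, hN1⟩ := exists_nat_gt (1/(t*dS))
      obtain ⟨N2, hN2⟩ := exists_nat_gt (8/δ)
      obtain ⟨N3, hN3⟩ := exists_lt_of_lt_ciSup (show dS - δ/8 < dS by linarith)
      set N := max (max N1 N2) N3 with hNdef
      refine ⟨N, fun n hn k hk => ?_⟩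
      by_contra hcon
      push_neg at hcon
      -- the two far points
      set y₁ := p n with hy₁
      set y₂ := p k with hy₂
      have hn1 : N1 ≤ n := le_trans (le_trans (le_max_left _ _) (le_max_left _ _)) hn
      have hn2 : N2 ≤ n := le_trans (le_trans (le_max_right _ _) (le_max_left _ _)) hn
      have hk1 : N1 ≤ k := le_trans (le_trans (le_max_left _ _) (le_max_left _ _)) hk
      have hk2 : N2 ≤ k := le_trans (le_trans (le_max_right _ _) (le_max_left _ _)) hk
      have hn3 : N3 ≤ n := le_trans (le_max_right _ _) hn
      have hk3 : N3 ≤ k := le_trans (le_max_right _ _) hk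
      -- 1/(n+1) bounds
      have hfn : (1:ℝ)/(↑n+1) ≤ t*dS := by
        have h1 := frac_mono hn1
        have h2 : (1:ℝ)/(↑N1+1) ≤ t*dS := by
          rw [div_le_iff₀ (by positivity)]
          rw [div_lt_iff₀ (by positivity)] at hN1
          have : (0:ℝ) ≤ N1 := Nat.cast_nonneg N1
          nlinarith
        linarith
      have hfk : (1:ℝ)/(↑k+1) ≤ t*dS := by
        have h1 := frac_mono hk1
        have h2 : (1:ℝ)/(↑N1+1) ≤ t*dS := by
          rw [div_le_iff₀ (by positivity)]
          rw [div_lt_iff₀ (by positivity)] at hN1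
          have : (0:ℝ) ≤ N1 := Nat.cast_nonneg N1
          nlinarith
        linarith
      have hfn8 : (1:ℝ)/(↑n+1) ≤ δ/8 := by
        have h1 := frac_mono hn2
        have h2 : (1:ℝ)/(↑N2+1) ≤ δ/8 := by
          rw [div_le_div_iff₀ (by positivity) (by norm_num)]
          rw [div_lt_iff₀ hδpos] at hN2
          have : (0:ℝ) ≤ N2 := Nat.cast_nonneg N2
          nlinarith
        linarith
      -- distances to a0
      have hd1 : dist a0 y₁ ≤ dS + 1/(↑n+1) := le_of_lt (by
        have := hp2 n; have := hd_le_dS n; simp only [hy₁]; linarith)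
      have hd2 : dist a0 y₂ ≤ dS + 1/(↑k+1) := le_of_lt (by
        have := hp2 k; have := hd_le_dS k; simp only [hy₂]; linarith)
      have hd1' : dist a0 y₁ ≤ dS + 1 := by
        have : (1:ℝ)/(↑n+1) ≤ 1 := by have := frac_mono (Nat.zero_le n); simpa using this
        linarith
      have hd2' : dist a0 y₂ ≤ dS + 1 := by
        have : (1:ℝ)/(↑k+1) ≤ 1 := by have := frac_mono (Nat.zero_le k); simpa using this
        linarith
      -- pull in both points toward a0
      obtain ⟨y₁', hy1a, hy1b⟩ := pull_in hm hB a0 y₁ l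
      obtain ⟨y₂', hy2a, hy2b⟩ := pull_in hm hB a0 y₂ l
      rw [← ht] at hy1a hy1b hy2a hy2b
      have hyd1 : dist y₁ y₁' ≤ t*(dS+1) := by
        rw [hy1a, dist_comm y₁ a0]
        exact mul_le_mul_of_nonneg_left hd1' htpos.le
      have hyd2 : dist y₂ y₂' ≤ t*(dS+1) := by
        rw [hy2a, dist_comm y₂ a0]
        exact mul_le_mul_of_nonneg_left hd2' htpos.le
      -- radius bound
      have hr1 : dist a0 y₁' ≤ dS := by
        have hu : (0:ℝ) ≤ 1/(↑n+1) := by positivity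
        have e1 : (1-t) * dist a0 y₁ ≤ (1-t)*(dS + 1/(↑n+1)) :=
          mul_le_mul_of_nonneg_left hd1 (by linarith)
        have e2 : (1-t)*(dS + 1/(↑n+1)) ≤ dS := by nlinarith [mul_nonneg htpos.le hu]
        linarith
      have hr2 : dist a0 y₂' ≤ dS := by
        have hu : (0:ℝ) ≤ 1/(↑k+1) := by positivity
        have e1 : (1-t) * dist a0 y₂ ≤ (1-t)*(dS + 1/(↑k+1)) :=
          mul_le_mul_of_nonneg_left hd2 (by linarith)
        have e2 : (1-t)*(dS + 1/(↑k+1)) ≤ dS := by nlinarith [mul_nonneg htpos.le hu]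
        linarith
      -- separation
      have ht8 : t*(dS+1) ≤ σ/8 := by
        rw [le_div_iff₀ (by positivity : (0:ℝ) < 8*(dS+1))] at htσ
        nlinarith
      have htδ8 : t*(dS+1) ≤ δ/8 := by
        rw [le_div_iff₀ (by positivity : (0:ℝ) < 8*(dS+1))] at htδ
        nlinarith
      have hsep : σ/(2*dS) * dS ≤ dist y₁' y₂' := by
        have h1 : σ ≤ dist y₁ y₂ := hcon
        have h2 : dist y₁ y₂ ≤ dist y₁ y₁' + dist y₁' y₂' + dist y₂' y₂ := dist_triangle4 _ _ _ _
        have h3 : dist y₂' y₂ = dist y₂ y₂' := dist_comm _ _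
        have h4 : σ/(2*dS) * dS = σ/2 := by field_simp
        rw [h4]; linarith
      -- WUC conclusion
      have hWc := hδ y₁' y₂' hr1 hr2 hsep
      -- lower bound on dist a0 (m y₁' y₂')
      have hmid : dist (m y₁' y₂') (m y₁ y₂) ≤ (dist y₁' y₁ + dist y₂' y₂)/2 := hB y₁' y₂' y₁ y₂
      set nk := min n k with hnk
      have hzC : f (m y₁ y₂) ≤ rs + 1/(↑N+1) := by
        have hc := circ_mid_le hA' hAb hm hB y₁ y₂
        have e1 := hp1 n
        have e2 := hp1 k
        have e3 := frac_mono hn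
        have e4 := frac_mono hk
        simp only [← hf] at hc
        simp only [hy₁, hy₂]
        linarith
      have hzD : d N ≤ dist a0 (m y₁ y₂) :=
        csInf_le (hDbb N) ⟨m y₁ y₂, hzC, rfl⟩
      have hdN : dS - δ/8 < d N := lt_of_lt_of_le hN3 (hd_mono (le_trans (le_max_right _ _) (le_refl N)))
      have hlow : dS - δ/8 - t*(dS+1) ≤ dist a0 (m y₁' y₂') := by
        have h1 : dist a0 (m y₁ y₂) ≤ dist a0 (m y₁' y₂') + dist (m y₁' y₂') (m y₁ y₂) :=
          dist_triangle _ _ _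
        have h2 : (dist y₁' y₁ + dist y₂' y₂)/2 ≤ t*(dS+1) := by
          rw [dist_comm y₁' y₁, dist_comm y₂' y₂]; linarith
        linarith
      have : δ ≤ dS - dist a0 (m y₁' y₂') := hWc
      linarith
  obtain ⟨x, hx⟩ := cauchySeq_tendsto_of_complete hCauchy
  refine ⟨x, fun y => ?_⟩
  have hfx : f x ≤ rs := by
    have hlim : Filter.Tendsto (fun n => dist x (p n) + (rs + 1/(↑n+1))) Filter.atTop
        (nhds (0 + (rs + 0))) := by
      apply Filter.Tendsto.add
      · exact tendsto_iff_dist_tendsto_zero.mp hx |>.congr (fun n => by rw [dist_comm])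
      · exact tendsto_const_nhds.add tendsto_one_div_add_atTop_nhds_zero_nat
    have hle : ∀ n, f x ≤ dist x (p n) + (rs + 1/(↑n+1)) := by
      intro n
      have := circ_lipschitz hA' hAb x (p n)
      have h2 := hp1 n
      simp only [← hf] at this
      linarith
    have := ge_of_tendsto' hlim hle
    simpa using this
  exact le_trans hfx (hrs_le y)


variable {X : Type*} [MetricSpace X]

private lemma frac_mono' {N n : ℕ} (h : N ≤ n) : (1:ℝ)/(↑n+1) ≤ 1/(↑N+1) := by
  have hc : (N:ℝ) ≤ n := Nat.cast_le.mpr h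
  apply one_div_le_one_div_of_le (by positivity)
  linarith

private lemma tendsto_one_div_nat : Filter.Tendsto (fun j : ℕ => (1:ℝ)/(↑j+1))
    Filter.atTop (nhds 0) := tendsto_one_div_add_atTop_nhds_zero_nat

private lemma minimizer_unique {m : X → X → X}
    (hm : IsMidpointMap m) (hB : IsBNPC m) (hW : IsWUC m)
    {A : Set X} (hA : A.Nonempty) (hAb : Bornology.IsBounded A)
    {u v : X} (hu : ∀ y, circ A u ≤ circ A y) (hv : ∀ y, circ A v ≤ circ A y) :
    u = v := by
  classical
  by_contra hne
  obtain ⟨b0, hb0⟩ := hA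
  have hA' : A.Nonempty := ⟨b0, hb0⟩
  set rb := circ A u with hrb
  have hfv : circ A v = rb := le_antisymm (hv u) (hu v)
  have hrbnn : 0 ≤ rb := circ_nonneg hA' hAb u
  have hrbpos : 0 < rb := by
    rcases lt_or_eq_of_le hrbnn with h | h
    · exact h
    · exfalso; apply hne
      have h1 : dist u b0 ≤ 0 := by
        have := dist_le_circ hA' hAb hb0 u; rw [← hrb] at this; linarith [h.symm ▸ this]
      have h2 : dist v b0 ≤ 0 := by
        have := dist_le_circ hA' hAb hb0 v; rw [hfv] at this; linarith [h ▸ this]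
      have := dist_triangle u b0 v
      have hd : dist u v ≤ 0 := by
        rw [dist_comm b0 v] at this
        linarith
      exact dist_le_zero.mp hd
  set w := m u v with hw
  have hfw : circ A w = rb := by
    apply le_antisymm
    · have := circ_mid_le hA' hAb hm hB u v
      rw [hfv, ← hrb] at this; linarith
    · exact hu w
  set ε := dist u v with hε
  have hεpos : 0 < ε := dist_pos.mpr hne
  -- far points
  have hfarsel : ∀ j : ℕ, ∃ a, a ∈ A ∧ rb - 1/(↑j+1) < dist w a := by
    intro j
    have hpos : (0:ℝ) < 1/(↑j+1) := by positivity
    have : rb - 1/(↑j+1) < circ A w := by rw [hfw]; linarith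
    obtain ⟨a, ha, hfar⟩ := exists_far hA' this
    exact ⟨a, ha, hfar⟩
  choose aa haaA haafar using hfarsel
  -- basic bounds on far points
  have hua : ∀ j, dist u (aa j) ≤ rb := fun j => by
    have := dist_le_circ hA' hAb (haaA j) u; rw [← hrb] at this; exact this
  have hva : ∀ j, dist v (aa j) ≤ rb := fun j => by
    have := dist_le_circ hA' hAb (haaA j) v; rw [hfv] at this; exact this
  have hwa : ∀ j, rb - 1/(↑j+1) ≤ dist w (aa j) := fun j => (haafar j).le
  -- abbreviations
  set σ : ℕ → ℕ → ℝ := fun j k => sigf m u v (aa j) k with hσdef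
  have hσnn : ∀ j k, 0 ≤ σ j k := fun j k => sigf_nonneg m u v (aa j) k
  -- choose K
  obtain ⟨K, hK⟩ := exists_pow_lt_of_lt_one
    (show (0:ℝ) < ε/(8*rb) by positivity) (by norm_num : (1:ℝ)/2 < 1)
  have hKb : rb * (1/2)^K ≤ ε/8 := by
    have : rb * ((1/2:ℝ)^K) ≤ rb * (ε/(8*rb)) := by
      apply mul_le_mul_of_nonneg_left hK.le hrbnn
    have h2 : rb * (ε/(8*rb)) = ε/8 := by field_simp
    linarith [h2 ▸ this]
  by_cases hall : ∀ k' < K, Filter.Tendsto (fun j => σ j k') Filter.atTop (nhds 0)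
  · -- Case A: all separations vanish; bottom-out by triangle inequality
    have hsum : Filter.Tendsto (fun j => ∑ i ∈ Finset.range K, σ j i) Filter.atTop (nhds 0) := by
      have := Filter.Tendsto.congr (f₁ := fun j => ∑ i ∈ Finset.range K, σ j i) (fun j => rfl)
        (tendsto_finset_sum (Finset.range K) (fun i hi => hall i (Finset.mem_range.mp hi)))
      simpa using this
    rw [Metric.tendsto_atTop] at hsum
    obtain ⟨J, hJ⟩ := hsum (ε/8) (by positivity)
    have hJ' := hJ J le_rfl
    rw [Real.dist_eq, sub_zero] at hJ'
    have hJ'' : ∑ i ∈ Finset.range K, σ J i < ε/8 := lt_of_abs_lt hJ'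
    -- invariant at (J, K)
    obtain ⟨i1, i2, i3⟩ := apex_invariant hm hB u v (aa J) rb (1/(↑J+1))
      (hua J) (hva J) (hwa J) K
    have hRhigh := Rseq_high (r := rb) (σ := σ J) (fun k => hσnn J k) K
    have htri : ε ≤ dist u (Useq m u (aa J) K) + dist v (Useq m u (aa J) K) := by
      calc ε = dist u v := rfl
        _ ≤ dist u (Useq m u (aa J) K) + dist (Useq m u (aa J) K) v := dist_triangle _ _ _
        _ = dist u (Useq m u (aa J) K) + dist v (Useq m u (aa J) K) := by
              rw [dist_comm (Useq m u (aa J) K) v]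
    have : ε ≤ 2 * (rb * (1/2)^K + ∑ i ∈ Finset.range K, σ J i) := by
      have r1 : dist u (Useq m u (aa J) K) ≤ rb * (1/2)^K + ∑ i ∈ Finset.range K, σ J i :=
        le_trans i1 hRhigh
      have r2 : dist v (Useq m u (aa J) K) ≤ rb * (1/2)^K + ∑ i ∈ Finset.range K, σ J i :=
        le_trans i2 hRhigh
      linarith
    linarith
  · -- Case B
    push_neg at hall
    have hex : ∃ k', k' < K ∧ ¬ Filter.Tendsto (fun j => σ j k') Filter.atTop (nhds 0) := hall
    set kb := Nat.find hex with hkb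
    obtain ⟨hkbK, hkbnt⟩ := Nat.find_spec hex
    have hTi : ∀ i, i < kb → Filter.Tendsto (fun j => σ j i) Filter.atTop (nhds 0) := by
      intro i hi
      have := Nat.find_min hex hi
      rw [not_and] at this
      have hiK : i < K := lt_trans hi hkbK
      exact not_not.mp (this hiK)
    -- extract frequent separation s
    rw [Metric.tendsto_atTop] at hkbnt
    push_neg at hkbnt
    obtain ⟨s, hspos, hsfreq⟩ := hkbnt
    have hsfreq' : ∀ N, ∃ j ≥ N, s ≤ σ j kb := by
      intro N
      obtain ⟨j, hj, hj2⟩ := hsfreq N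
      refine ⟨j, hj, ?_⟩
      rw [Real.dist_eq, sub_zero] at hj2
      rw [abs_of_nonneg (hσnn j kb)] at hj2
      exact hj2
    -- parameters
    set rd : ℝ := rb * (1/2)^(kb+1) with hrd
    have hrdpos : 0 < rd := by positivity
    obtain ⟨δ, hδpos, hδ⟩ := hW w (s/(2*rd)) rd (by positivity) hrdpos
    obtain ⟨l, hl⟩ := exists_pow_lt_of_lt_one
      (show (0:ℝ) < min s δ / (16*(rd+1)) by positivity) (by norm_num : (1:ℝ)/2 < 1)
    set t : ℝ := (1/2)^l with ht
    have htpos : 0 < t := by positivity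
    have htrd_s : t * rd ≤ s/16 := by
      have h1 : t * (16*(rd+1)) ≤ min s δ := by
        rw [← le_div_iff₀ (by positivity : (0:ℝ) < 16*(rd+1))]
        exact hl.le
      have h2 : min s δ ≤ s := min_le_left _ _
      nlinarith
    have htrd_δ : t * rd ≤ δ/16 := by
      have h1 : t * (16*(rd+1)) ≤ min s δ := by
        rw [← le_div_iff₀ (by positivity : (0:ℝ) < 16*(rd+1))]
        exact hl.le
      have h2 : min s δ ≤ δ := min_le_right _ _
      nlinarith
    have ht1 : t ≤ 1 := by
      rw [ht]; apply pow_le_one₀ (by norm_num) (by norm_num)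
    -- eventual bounds
    have hSt : Filter.Tendsto (fun j => ∑ i ∈ Finset.range kb, σ j i) Filter.atTop (nhds 0) := by
      have := tendsto_finset_sum (Finset.range kb) (fun i hi => hTi i (Finset.mem_range.mp hi))
      simpa using this
    rw [Metric.tendsto_atTop] at hSt
    have hminpos : 0 < min (δ/12) (min (2*t*rd) (2*rd)) := by
      apply lt_min (by positivity) (lt_min (by positivity) (by positivity))
    obtain ⟨J1, hJ1⟩ := hSt (min (δ/12) (min (2*t*rd) (2*rd))) hminpos
    have hJη := tendsto_one_div_nat
    rw [Metric.tendsto_atTop] at hJη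
    obtain ⟨J2, hJ2⟩ := hJη (δ/8) (by positivity)
    obtain ⟨j, hjge, hjs⟩ := hsfreq' (max J1 J2)
    have hj1 : J1 ≤ j := le_trans (le_max_left _ _) hjge
    have hj2 : J2 ≤ j := le_trans (le_max_right _ _) hjge
    -- bounds at j
    have hSj : ∑ i ∈ Finset.range kb, σ j i < min (δ/12) (min (2*t*rd) (2*rd)) := by
      have := hJ1 j hj1
      rw [Real.dist_eq, sub_zero] at this
      exact lt_of_abs_lt this
    have hSnn : (0:ℝ) ≤ ∑ i ∈ Finset.range kb, σ j i :=
      Finset.sum_nonneg (fun i _ => hσnn j i)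
    have hηj : (1:ℝ)/(↑j+1) < δ/8 := by
      have := hJ2 j hj2
      rw [Real.dist_eq, sub_zero] at this
      have h2 : |(1:ℝ)/(↑j+1)| = 1/(↑j+1) := abs_of_nonneg (by positivity)
      rw [h2] at this
      exact this
    -- kill package at (j, kb)
    obtain ⟨K1, K2, K3⟩ := kill_package hm hB u v (aa j) rb (1/(↑j+1))
      (hua j) (hva j) (hwa j) kb
    set Pk := Useq m u (aa j) kb with hPkdef
    set p := m u Pk with hpdef
    set q := m Pk v with hqdef
    set Rk := Rseq rb (σ j) kb with hRkdef
    set Hk := Hseq (1/(↑j+1)) (σ j) kb with hHkdef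
    have hσpq : dist p q = σ j kb := rfl
    -- Rk bounds
    have hRklow : 2*rd ≤ Rk := by
      have := Rseq_low (r := rb) (σ := σ j) (fun k => hσnn j k) kb
      have h2 : rb * (1/2)^kb = 2*rd := by rw [hrd]; ring
      rw [h2] at this; exact this
    have hRkhigh : Rk ≤ 2*rd + ∑ i ∈ Finset.range kb, σ j i := by
      have := Rseq_high (r := rb) (σ := σ j) (fun k => hσnn j k) kb
      have h2 : rb * (1/2)^kb = 2*rd := by rw [hrd]; ring
      rw [h2] at this; exact this
    set c : ℝ := Rk/2 - rd with hc
    have hcnn : 0 ≤ c := by rw [hc]; linarith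
    have hcle : c ≤ t*rd := by
      have : Rk/2 ≤ rd + (∑ i ∈ Finset.range kb, σ j i)/2 := by linarith
      have h2 : (∑ i ∈ Finset.range kb, σ j i)/2 ≤ t*rd := by
        have := lt_of_lt_of_le hSj (le_trans (min_le_right _ _) (min_le_left _ _))
        linarith
      rw [hc]; linarith
    have hcle' : c ≤ rd := by
      have h2 : (∑ i ∈ Finset.range kb, σ j i)/2 ≤ rd := by
        have := lt_of_lt_of_le hSj (le_trans (min_le_right _ _) (min_le_right _ _))
        linarith
      rw [hc]; linarith
    have hHkle : Hk ≤ δ/4 := by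
      rw [hHkdef, Hseq_eq]
      have h2 : (3:ℝ)/2 * ∑ i ∈ Finset.range kb, σ j i ≤ 3/2 * (δ/12) := by
        have := lt_of_lt_of_le hSj (min_le_left _ _)
        nlinarith
      linarith [hηj]
    -- pull in
    obtain ⟨p', hpa, hpb⟩ := pull_in hm hB w p l
    obtain ⟨q', hqa, hqb⟩ := pull_in hm hB w q l
    rw [← ht] at hpa hpb hqa hqb
    have hdp : dist w p ≤ rd + c := by rw [hc]; linarith [K1]
    have hdq : dist w q ≤ rd + c := by rw [hc]; linarith [K2]
    have hple : dist p p' ≤ 2*t*rd := by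
      rw [hpa, dist_comm p w]
      have : t * dist w p ≤ t * (rd + c) := mul_le_mul_of_nonneg_left hdp htpos.le
      nlinarith
    have hqle : dist q q' ≤ 2*t*rd := by
      rw [hqa, dist_comm q w]
      have : t * dist w q ≤ t * (rd + c) := mul_le_mul_of_nonneg_left hdq htpos.le
      nlinarith
    have hr1 : dist w p' ≤ rd := by
      have e1 : (1-t) * dist w p ≤ (1-t)*(rd + c) := mul_le_mul_of_nonneg_left hdp (by linarith)
      have e2 : (1-t)*(rd+c) ≤ rd := by nlinarith [mul_nonneg htpos.le hcnn]
      linarith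
    have hr2 : dist w q' ≤ rd := by
      have e1 : (1-t) * dist w q ≤ (1-t)*(rd + c) := mul_le_mul_of_nonneg_left hdq (by linarith)
      have e2 : (1-t)*(rd+c) ≤ rd := by nlinarith [mul_nonneg htpos.le hcnn]
      linarith
    have hsep : s/(2*rd) * rd ≤ dist p' q' := by
      have h1 : s ≤ dist p q := by rw [hσpq]; exact hjs
      have h2 : dist p q ≤ dist p p' + dist p' q' + dist q' q := dist_triangle4 _ _ _ _
      have h3 : dist q' q = dist q q' := dist_comm _ _
      have h4 : s/(2*rd) * rd = s/2 := by field_simp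
      have h5 : 2*t*rd ≤ s/8 := by linarith [htrd_s]
      rw [h4]; linarith
    have hWc := hδ p' q' hr1 hr2 hsep
    -- lower bound on dist w (m p' q')
    have hmidc : dist (m p' q') (m p q) ≤ (dist p' p + dist q' q)/2 := hB p' q' p q
    have hlow : rd - Hk - 2*t*rd ≤ dist w (m p' q') := by
      have t1 : dist w (m p q) ≤ dist w (m p' q') + dist (m p' q') (m p q) := dist_triangle _ _ _
      have t2 : (dist p' p + dist q' q)/2 ≤ 2*t*rd := by
        rw [dist_comm p' p, dist_comm q' q]; linarith
      have t3 : Rk/2 - Hk ≤ dist w (m p q) := K3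
      have t4 : rd ≤ Rk/2 := by rw [hc] at hcnn; linarith
      linarith
    have hfin : δ ≤ rd - dist w (m p' q') := hWc
    have h2trd : 2*t*rd ≤ δ/8 := by linarith [htrd_δ]
    linarith [hHkle]


end CircProof

theorem stmt_10 {X : Type*} [MetricSpace X] [CompleteSpace X] (m : X → X → X)
    (hm : IsMidpointMap m) (hB : IsBNPC m) (hW : IsWUC m)
    (A : Set X) (hA : A.Nonempty) (hAb : Bornology.IsBounded A) :
    ∃! x : X, ∀ y : X,
      sSup ((fun a => dist x a) '' A) ≤ sSup ((fun a => dist y a) '' A) := by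
  obtain ⟨x, hx⟩ := exists_minimizer hm hB hW hA hAb
  refine ⟨x, ?_, ?_⟩
  · intro y; exact hx y
  · intro y hy
    exact minimizer_unique hm hB hW hA hAb (fun z => hy z) (fun z => hx z)
end

section
/- Let X be a complete metric space equipped with a midpoint map m, assume (X,m) is Busemann non-positively curved and uniformly convex, and let a group Γ act on X by isometries. If the action is reduced and has no global fixed point, then the action is C-minimal: X has no nonempty proper closed convex Γ-invariant subset. -/
/-- `(X, m)` is uniformly convex. -/
def IsUC {X : Type*} [MetricSpace X] (m : X → X → X) : Prop :=
  ∃ δ : ℝ → ℝ, (∀ ε : ℝ, 0 < ε → 0 < δ ε) ∧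
    ∀ (ε r : ℝ) (x y₁ y₂ : X), 0 < ε → 0 < r → dist x y₁ ≤ r → dist x y₂ ≤ r →
      ε * r ≤ dist y₁ y₂ → dist x (m y₁ y₂) ≤ (1 - δ ε) * r

theorem stmt_12 {X : Type*} [MetricSpace X] [CompleteSpace X] (m : X → X → X)
    (hm : IsMidpointMap m) (hB : IsBNPC m) (hU : IsUC m)
    (Γ : Type*) [Group Γ] [MulAction Γ X]
    (hiso : ∀ γ : Γ, Isometry fun x : X => γ • x)
    (hred : ReducedAction Γ m)
    (hnofix : ¬ ∃ x : X, ∀ γ : Γ, γ • x = x) :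
    ∀ C : Set X, C.Nonempty → IsClosed C → MConvex m C →
      (∀ γ : Γ, ∀ x ∈ C, γ • x ∈ C) → C = Set.univ := by
  intro C hCne hCcl hCconv hCinv
  by_contra hne
  have hinv' : ∀ γ : Γ, (fun x : X => γ • x) '' C = C := by
    intro γ
    apply Set.Subset.antisymm
    · rintro _ ⟨c, hc, rfl⟩; exact hCinv γ c hc
    · intro c hc
      exact ⟨γ⁻¹ • c, hCinv γ⁻¹ c hc, by simp⟩
  by_cases hb : Bornology.IsBounded C
  · -- bounded case: construct a circumcenter, a global fixed point
    obtain ⟨c₀, hc₀⟩ := hCne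
    haveI : Nonempty X := ⟨c₀⟩
    set rad : X → ℝ := fun x => sSup ((dist x) '' C) with hraddef
    have hCne' : ∀ x : X, ((dist x) '' C).Nonempty := fun x => ⟨_, ⟨c₀, hc₀, rfl⟩⟩
    have hbdd : ∀ x : X, BddAbove ((dist x) '' C) := by
      intro x
      obtain ⟨R, hR⟩ := hb.subset_closedBall x
      exact ⟨R, by rintro _ ⟨c, hc, rfl⟩; simpa [dist_comm] using hR hc⟩
    have h_le : ∀ (x : X), ∀ c ∈ C, dist x c ≤ rad x := by
      intro x c hc
      exact le_csSup (hbdd x) ⟨c, hc, rfl⟩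
    have h_nonneg : ∀ x : X, 0 ≤ rad x :=
      fun x => le_trans dist_nonneg (h_le x c₀ hc₀)
    have h_lip : ∀ x y : X, rad x ≤ dist x y + rad y := by
      intro x y
      apply csSup_le (hCne' x)
      rintro _ ⟨c, hc, rfl⟩
      have := h_le y c hc
      have := dist_triangle x y c
      linarith
    set r₀ : ℝ := ⨅ x : X, rad x with hr₀def
    have hbddb : BddBelow (Set.range rad) := ⟨0, by rintro _ ⟨x, rfl⟩; exact h_nonneg x⟩
    have hr₀le : ∀ x : X, r₀ ≤ rad x := fun x => ciInf_le hbddb x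
    have hr₀nonneg : 0 ≤ r₀ := le_ciInf h_nonneg
    obtain ⟨δ, hδpos, hδ⟩ := hU
    rcases eq_or_lt_of_le hr₀nonneg with hr₀0 | hr₀pos
    · -- r₀ = 0 : C is a singleton, whose point is fixed
      have hsingle : ∀ c ∈ C, ∀ c' ∈ C, c = c' := by
        intro c hc c' hc'
        have hd : dist c c' ≤ 0 := by
          apply le_of_forall_pos_le_add
          intro ε hε
          obtain ⟨x, hx⟩ : ∃ x : X, rad x < ε / 2 := by
            apply exists_lt_of_ciInf_lt
            rw [← hr₀def, ← hr₀0]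
            linarith
          have h1 := h_le x c hc
          have h2 := h_le x c' hc'
          have := dist_triangle c x c'
          rw [dist_comm c x] at this
          linarith
        exact dist_le_zero.mp hd
      exact hnofix ⟨c₀, fun γ => hsingle _ (hCinv γ c₀ hc₀) _ hc₀⟩
    · -- r₀ > 0 : minimizing sequence is Cauchy
      have hex : ∀ n : ℕ, ∃ x : X, rad x < r₀ + 1 / (n + 1) := by
        intro n
        apply exists_lt_of_ciInf_lt
        rw [← hr₀def]
        have : (0:ℝ) < 1 / (n + 1) := by positivity
        linarith
      choose u hu using hex
      -- key estimate via uniform convexity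
      have hmid : ∀ (ε s : ℝ) (x y : X), 0 < ε → r₀ ≤ s → s ≤ r₀ + 1 →
          rad x ≤ s → rad y ≤ s → ε ≤ dist x y →
          r₀ ≤ (1 - δ (ε / (r₀ + 1))) * s := by
        intro ε s x y hε hs hs1 hx hy hd
        have hr1 : (0:ℝ) < r₀ + 1 := by linarith
        have hε' : 0 < ε / (r₀ + 1) := div_pos hε hr1
        have hspos : 0 < s := lt_of_lt_of_le hr₀pos hs
        have h1 : rad (m x y) ≤ (1 - δ (ε / (r₀ + 1))) * s := by
          apply csSup_le (hCne' _)
          rintro _ ⟨c, hc, rfl⟩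
          rw [dist_comm]
          apply hδ _ s c x y hε' hspos
          · rw [dist_comm]; exact le_trans (h_le x c hc) hx
          · rw [dist_comm]; exact le_trans (h_le y c hc) hy
          · calc ε / (r₀ + 1) * s ≤ ε / (r₀ + 1) * (r₀ + 1) :=
                  mul_le_mul_of_nonneg_left hs1 (le_of_lt hε')
              _ = ε := by field_simp
              _ ≤ dist x y := hd
        exact le_trans (hr₀le _) h1
      have hCau : CauchySeq u := by
        rw [Metric.cauchySeq_iff]
        intro ε hε
        have hr1 : (0:ℝ) < r₀ + 1 := by linarith
        set α := δ (ε / (r₀ + 1)) with hα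
        have hαpos : 0 < α := hδpos _ (div_pos hε hr1)
        set η := min 1 (α * r₀ / 2) with hη
        have hηpos : 0 < η := lt_min one_pos (by positivity)
        obtain ⟨N, hN⟩ := exists_nat_one_div_lt hηpos
        refine ⟨N, fun p hp q hq => ?_⟩
        by_contra hcon
        push_neg at hcon
        have hmono : ∀ k : ℕ, N ≤ k → rad (u k) ≤ r₀ + η := by
          intro k hk
          have h1 : (1:ℝ) / (k + 1) ≤ 1 / (N + 1) := by
            apply one_div_le_one_div_of_le
            · positivity
            · exact_mod_cast by omega
          have := hu k
          linarith
        have hup := hmono p hp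
        have huq := hmono q hq
        have hη1 : η ≤ 1 := min_le_left _ _
        have hkey := hmid ε (r₀ + η) (u p) (u q) hε (by linarith) (by linarith)
          hup huq hcon
        have hη2 : η ≤ α * r₀ / 2 := min_le_right _ _
        nlinarith
      obtain ⟨z, hz⟩ := cauchySeq_tendsto_of_complete hCau
      -- rad z ≤ r₀
      have hzrad : rad z ≤ r₀ := by
        have htend : Filter.Tendsto (fun n : ℕ => dist z (u n) + (r₀ + 1 / (n + 1)))
            Filter.atTop (nhds (0 + (r₀ + 0))) := by
          apply Filter.Tendsto.add
          · have : Filter.Tendsto (fun n : ℕ => dist z (u n)) Filter.atTop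
                (nhds (dist z z)) := Filter.Tendsto.dist tendsto_const_nhds hz
            simpa using this
          · exact Filter.Tendsto.add tendsto_const_nhds
              tendsto_one_div_add_atTop_nhds_zero_nat
        have hbound : ∀ n : ℕ, rad z ≤ dist z (u n) + (r₀ + 1 / (n + 1)) := by
          intro n
          have := h_lip z (u n)
          have := le_of_lt (hu n)
          linarith
        have := ge_of_tendsto' htend hbound
        simpa using this
      -- uniqueness of the circumcenter
      have huniq : ∀ w : X, rad w ≤ r₀ → w = z := by
        intro w hw
        by_contra hne'
        have hd : 0 < dist w z := dist_pos.mpr hne'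
        have hkey := hmid (dist w z) r₀ w z hd le_rfl (by linarith) hw hzrad le_rfl
        have hδ' : 0 < δ (dist w z / (r₀ + 1)) := hδpos _ (div_pos hd (by linarith))
        nlinarith
      -- z is a global fixed point
      refine hnofix ⟨z, fun γ => ?_⟩
      apply huniq
      have himg : (dist (γ • z)) '' C = (dist z) '' C := by
        ext d
        constructor
        · rintro ⟨c, hc, rfl⟩
          refine ⟨γ⁻¹ • c, hCinv γ⁻¹ c hc, ?_⟩
          have := (hiso γ).dist_eq z (γ⁻¹ • c)
          simpa using this.symm
        · rintro ⟨c, hc, rfl⟩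
          exact ⟨γ • c, hCinv γ c hc, (hiso γ).dist_eq z c⟩
      show sSup ((dist (γ • z)) '' C) ≤ r₀
      rw [himg]
      exact hzrad
  · -- unbounded case: contradicts reducedness
    exact hred ⟨C, hb, hCcl, hCconv, hne, fun γ => by
      rw [hinv' γ]; exact ne_of_eq_of_ne (Metric.hausdorffEDist_self (s := C)) ENNReal.zero_ne_top⟩
end
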